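/- arXiv:1509.06333 — 11 statements merged into one kernel-verified Lean document; each statement's English description precedes it below -/
import Mathlib

section
/- The maximum identifiability index of a set S equals the minimum over v ∈ S of the maximum identifiability index of v, i.e., Ω(S) = min_{v∈S} Ω(v). -/
open Finset

variable {α : Type*} [DecidableEq α]

/-- Two failure sets are distinguishable if some measurement path
intersects exactly one of them. -/
def distinguishable (P : Finset (Finset α)) (F1 F2 : Finset α) : Prop :=
  ∃ p ∈ P, ((p ∩ F1).Nonempty ∧ p ∩ F2 = ∅) ∨ ((p ∩ F2).Nonempty ∧ p ∩ F1 = ∅)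

/-- `S` is `k`-identifiable: any two failure sets of size at most `k` with different
intersections with `S` are distinguishable. -/
def identifiable (N : Finset α) (P : Finset (Finset α)) (k : ℕ) (S : Finset α) : Prop :=
  ∀ F1 F2 : Finset α, F1 ⊆ N → F2 ⊆ N → F1.card ≤ k → F2.card ≤ k →
    F1 ∩ S ≠ F2 ∩ S → distinguishable P F1 F2

/-- The maximum identifiability index of `S`: the largest `k` (capped at `|N|`)
such that `S` is `k`-identifiable. -/
noncomputable def Omega (N : Finset α) (P : Finset (Finset α)) (S : Finset α) : ℕ :=
  sSup {k | k ≤ N.card ∧ identifiable N P k S}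

theorem Omega_eq_min_Omega_singleton
    (N : Finset α) (P : Finset (Finset α)) (S : Finset α) (hS : S.Nonempty)
    (hSN : S ⊆ N) :
    Omega N P S = S.inf' hS (fun v => Omega N P {v}) := by
  have hzero : ∀ T : Finset α, identifiable N P 0 T := by
    intro T F1 F2 _ _ h1 h2 hne
    rw [Nat.le_zero, Finset.card_eq_zero] at h1 h2
    subst h1; subst h2; exact absurd rfl hne
  have hmono : ∀ (j k : ℕ) (T : Finset α), j ≤ k → identifiable N P k T →
      identifiable N P j T := by
    intro j k T hjk h F1 F2 hN1 hN2 h1 h2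
    exact h F1 F2 hN1 hN2 (h1.trans hjk) (h2.trans hjk)
  have hiff : ∀ k, identifiable N P k S ↔ ∀ v ∈ S, identifiable N P k {v} := by
    intro k
    constructor
    · intro h v hv F1 F2 hN1 hN2 h1 h2 hne
      refine h F1 F2 hN1 hN2 h1 h2 ?_
      intro heq
      apply hne
      ext x
      simp only [Finset.mem_inter, Finset.mem_singleton]
      constructor
      · rintro ⟨hx, rfl⟩
        have : x ∈ F2 ∩ S := heq ▸ Finset.mem_inter.mpr ⟨hx, hv⟩
        exact ⟨(Finset.mem_inter.mp this).1, rfl⟩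
      · rintro ⟨hx, rfl⟩
        have : x ∈ F1 ∩ S := heq ▸ Finset.mem_inter.mpr ⟨hx, hv⟩
        exact ⟨(Finset.mem_inter.mp this).1, rfl⟩
    · intro h F1 F2 hN1 hN2 h1 h2 hne
      have : ∃ v, v ∈ F1 ∩ S ↔ ¬ v ∈ F2 ∩ S := by
        by_contra hc
        push_neg at hc
        apply hne
        ext x
        have := hc x
        tauto
      obtain ⟨v, hv⟩ := this
      have hvS : v ∈ S := by
        by_cases hv1 : v ∈ F1 ∩ S
        · exact (Finset.mem_inter.mp hv1).2
        · have hv2 : v ∈ F2 ∩ S := by tauto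
          exact (Finset.mem_inter.mp hv2).2
      refine h v hvS F1 F2 hN1 hN2 h1 h2 ?_
      intro heq
      have h1v : v ∈ F1 ∩ {v} ↔ v ∈ F2 ∩ {v} := by rw [heq]
      simp only [Finset.mem_inter, Finset.mem_singleton, and_true] at h1v
      simp only [Finset.mem_inter] at hv
      tauto
  set A : Finset α → Set ℕ := fun T => {k | k ≤ N.card ∧ identifiable N P k T} with hA
  have hbdd : ∀ T, BddAbove (A T) := fun T => ⟨N.card, fun k hk => hk.1⟩
  have hne0 : ∀ T, (A T).Nonempty := fun T => ⟨0, Nat.zero_le _, hzero T⟩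
  have hmem : ∀ T, Omega N P T ∈ A T := fun T => Nat.sSup_mem (hne0 T) (hbdd T)
  apply le_antisymm
  · apply Finset.le_inf'
    intro v hv
    refine csSup_le_csSup (hbdd _) (hne0 S) ?_
    intro k hk
    exact ⟨hk.1, (hiff k).mp hk.2 v hv⟩
  · obtain ⟨v0, hv0⟩ := id hS
    have hmem' : S.inf' hS (fun v => Omega N P {v}) ∈ A S := by
      constructor
      · exact le_trans (Finset.inf'_le _ hv0) (hmem {v0}).1
      · rw [hiff]
        intro v hv
        exact hmono _ _ _ (Finset.inf'_le _ hv) (hmem {v}).2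
    exact le_csSup (hbdd S) hmem'
end

section
/- Sufficient condition for k-identifiability: if for every failure set F ⊆ N with |F| ≤ k and every node v ∈ S \ F there exists a path p ∈ P with v ∈ p and p ∩ F = ∅, then S is k-identifiable. -/
open Finset

variable {α : Type*} [DecidableEq α]

theorem identifiable_of_path_cover
    (N : Finset α) (P : Finset (Finset α)) (k : ℕ) (S : Finset α)
    (h : ∀ F ⊆ N, F.card ≤ k → ∀ v ∈ S, v ∉ F → ∃ p ∈ P, v ∈ p ∧ p ∩ F = ∅) :
    identifiable N P k S := by
  intro F1 F2 hN1 hN2 hc1 hc2 hne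
  have : ∃ v ∈ S, (v ∈ F1 ∧ v ∉ F2) ∨ (v ∈ F2 ∧ v ∉ F1) := by
    by_contra hcon
    push_neg at hcon
    apply hne
    ext x
    simp only [mem_inter]
    constructor
    · rintro ⟨hx1, hxS⟩
      refine ⟨?_, hxS⟩
      exact (hcon x hxS).1 hx1
    · rintro ⟨hx2, hxS⟩
      refine ⟨?_, hxS⟩
      exact (hcon x hxS).2 hx2
  obtain ⟨v, hvS, hcase⟩ := this
  rcases hcase with ⟨hv1, hv2⟩ | ⟨hv2, hv1⟩
  · obtain ⟨p, hp, hvp, hpF⟩ := h F2 hN2 hc2 v hvS hv2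
    exact ⟨p, hp, Or.inl ⟨⟨v, mem_inter.mpr ⟨hvp, hv1⟩⟩, hpF⟩⟩
  · obtain ⟨p, hp, hvp, hpF⟩ := h F1 hN1 hc1 v hvS hv1
    exact ⟨p, hp, Or.inr ⟨⟨v, mem_inter.mpr ⟨hvp, hv2⟩⟩, hpF⟩⟩
end

section
/- The set S'(k) := {v ∈ N : v is k-identifiable} is itself k-identifiable, and it contains every k-identifiable set; hence S'(k) is the unique maximum-cardinality k-identifiable set. -/
open Finset

variable {α : Type*} [DecidableEq α]

/-- `k`-identifiability for a set `S : Set α` of nodes of interest. -/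
def identifiableS (N : Finset α) (P : Finset (Finset α)) (k : ℕ) (S : Set α) : Prop :=
  ∀ F1 F2 : Finset α, F1 ⊆ N → F2 ⊆ N → F1.card ≤ k → F2.card ≤ k →
    (↑F1 ∩ S ≠ ↑F2 ∩ S) → distinguishable P F1 F2

/-- The set of all `k`-identifiable nodes. -/
def maxIdentSet (N : Finset α) (P : Finset (Finset α)) (k : ℕ) : Set α :=
  {v | v ∈ N ∧ identifiableS N P k {v}}

theorem maxIdentSet_identifiable_and_maximal
    (N : Finset α) (P : Finset (Finset α)) (k : ℕ) :
    identifiableS N P k (maxIdentSet N P k) ∧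
      ∀ S : Set α, S ⊆ ↑N → identifiableS N P k S → S ⊆ maxIdentSet N P k := by
  constructor
  · intro F1 F2 h1 h2 c1 c2 hne
    rw [Ne, Set.ext_iff] at hne
    push_neg at hne
    obtain ⟨v, hv⟩ := hne
    rcases hv with ⟨hv1, hv2⟩ | ⟨hv2, hv1⟩
    · obtain ⟨hvF1, hvN, hid⟩ := hv1
      exact hid F1 F2 h1 h2 c1 c2 (by
        intro h
        have := h.symm ▸ (Set.mem_inter hvF1 rfl : v ∈ (↑F1 : Set α) ∩ {v})
        exact hv2 ⟨this.1, hvN, hid⟩)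
    · obtain ⟨hvF2, hvN, hid⟩ := hv1
      exact hid F1 F2 h1 h2 c1 c2 (by
        intro h
        have := h ▸ (Set.mem_inter hvF2 rfl : v ∈ (↑F2 : Set α) ∩ {v})
        exact hv2 ⟨this.1, hvN, hid⟩)
  · intro S hSN hS v hvS
    refine ⟨by exact_mod_cast hSN hvS, ?_⟩
    intro F1 F2 h1 h2 c1 c2 hne
    refine hS F1 F2 h1 h2 c1 c2 ?_
    intro h
    apply hne
    ext x
    simp only [Set.mem_inter_iff, Set.mem_singleton_iff]
    constructor
    · rintro ⟨hx, rfl⟩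
      have : x ∈ (↑F2 : Set α) ∩ S := h ▸ Set.mem_inter hx hvS
      exact ⟨this.1, rfl⟩
    · rintro ⟨hx, rfl⟩
      have : x ∈ (↑F1 : Set α) ∩ S := h.symm ▸ Set.mem_inter hx hvS
      exact ⟨this.1, rfl⟩
end

section
/- If the total number of non-monitors is σ and S is σ-identifiable, then every possible failure set is determined: for any F1, F2 ⊆ N with F1 ∩ S ≠ F2 ∩ S, F1 and F2 are distinguishable. In particular, if S is k-identifiable for k = |N|, then for every v ∈ S there exists p ∈ P such that v ∈ p and p ∩ (N \ {v}) = ∅. -/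
open Finset

variable {α : Type*} [DecidableEq α]

theorem sigma_identifiable_determines_all
    (N : Finset α) (P : Finset (Finset α)) (S : Finset α) (hS : S ⊆ N)
    (h : identifiable N P N.card S) :
    (∀ F1 F2 : Finset α, F1 ⊆ N → F2 ⊆ N → F1 ∩ S ≠ F2 ∩ S →
        distinguishable P F1 F2) ∧
    (∀ v ∈ S, ∃ p ∈ P, v ∈ p ∧ p ∩ (N \ {v}) = ∅) := by
  constructor
  · intro F1 F2 h1 h2 hne
    exact h F1 F2 h1 h2 (card_le_card h1) (card_le_card h2) hne
  · intro v hv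
    have hne : N ∩ S ≠ (N \ {v}) ∩ S := by
      intro heq
      have hvN : v ∈ N ∩ S := mem_inter.2 ⟨hS hv, hv⟩
      rw [heq] at hvN
      simp at hvN
    obtain ⟨p, hpP, hcase⟩ := h N (N \ {v}) le_rfl.subset (sdiff_subset) le_rfl
      (card_le_card sdiff_subset) hne
    rcases hcase with ⟨⟨x, hx⟩, hemp⟩ | ⟨⟨x, hx⟩, hemp⟩
    · refine ⟨p, hpP, ?_, hemp⟩
      rw [mem_inter] at hx
      have : x ∉ N \ {v} := by
        intro hmem
        have : x ∈ p ∩ (N \ {v}) := mem_inter.2 ⟨hx.1, hmem⟩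
        simp [hemp] at this
      have hxv : x = v := by
        rw [mem_sdiff] at this
        push_neg at this
        simpa using this hx.2
      exact hxv ▸ hx.1

    · exfalso
      rw [mem_inter] at hx
      have : x ∈ p ∩ N := mem_inter.2 ⟨hx.1, (mem_sdiff.1 hx.2).1⟩
      simp [hemp] at this
end

section
/- Under the CAP probing model, a set S is k-identifiable if and only if for every set V' of at most k−1 non-monitors, every connected component of G − V' containing a node of S also contains a monitor. -/
open Finset SimpleGraph
open scoped Classical
set_option linter.unusedSectionVars false
set_option linter.unusedVariables false

variable {V : Type*} [Fintype V] [DecidableEq V]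

/-- Two failure sets of non-monitors are distinguishable under CAP if some walk
between monitors intersects exactly one of them. -/
def capDistinguishable (G : SimpleGraph V) (M : Finset V) (F1 F2 : Finset V) : Prop :=
  ∃ m1 ∈ M, ∃ m2 ∈ M, ∃ w : G.Walk m1 m2,
    ((∃ x ∈ w.support, x ∈ F1) ∧ ∀ x ∈ w.support, x ∉ F2) ∨
    ((∃ x ∈ w.support, x ∈ F2) ∧ ∀ x ∈ w.support, x ∉ F1)

/-- `S` is `k`-identifiable under CAP. -/
def capIdentifiable (G : SimpleGraph V) (M : Finset V) (k : ℕ) (S : Finset V) : Prop :=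
  ∀ F1 F2 : Finset V, (∀ x ∈ F1, x ∉ M) → (∀ x ∈ F2, x ∉ M) →
    F1.card ≤ k → F2.card ≤ k → F1 ∩ S ≠ F2 ∩ S → capDistinguishable G M F1 F2

/-- From a walk containing a vertex satisfying `p`, extract an initial segment
ending at the *first* such vertex. -/
lemma exists_first_aux {G : SimpleGraph V} (p : V → Prop) {a b : V} (w : G.Walk a b)
    (h : ∃ x ∈ w.support, p x) :
      ∃ x, p x ∧ ∃ w' : G.Walk a x, (∀ y ∈ w'.support, y ∈ w.support) ∧
        (∀ y ∈ w'.support, p y → y = x) := by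
  induction w with
  | nil =>
    simp only [Walk.support_nil, List.mem_singleton] at h
    obtain ⟨x, rfl, hpx⟩ := h
    exact ⟨x, hpx, Walk.nil, fun y hy => hy, fun y hy _ => by
      simpa [Walk.support_nil] using hy⟩
  | @cons u c d hadj w ih =>
    by_cases ha : p u
    · refine ⟨u, ha, Walk.nil, ?_, ?_⟩
      · intro y hy
        simp only [Walk.support_nil, List.mem_singleton] at hy
        simp [hy, Walk.support_cons]
      · intro y hy _
        simpa [Walk.support_nil] using hy
    · obtain ⟨x, hxs, hpx⟩ := h
      rw [Walk.support_cons, List.mem_cons] at hxs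
      have hx' : x ∈ w.support := by
        rcases hxs with rfl | hxs
        · exact absurd hpx ha
        · exact hxs
      obtain ⟨z, hpz, w', hsub, huniq⟩ := ih ⟨x, hx', hpx⟩
      refine ⟨z, hpz, Walk.cons hadj w', ?_, ?_⟩
      · intro y hy
        rw [Walk.support_cons, List.mem_cons] at hy ⊢
        rcases hy with rfl | hy
        · exact Or.inl rfl
        · exact Or.inr (hsub y hy)
      · intro y hy hpy
        rw [Walk.support_cons, List.mem_cons] at hy
        rcases hy with rfl | hy
        · exact absurd hpy ha
        · exact huniq y hy hpy

/-- The key half-lemma: if the component condition holds and `v ∈ S` lies in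
`F1` but not in `F2`, then `F1` and `F2` are distinguishable. -/
lemma cap_aux (G : SimpleGraph V) (M : Finset V) (k : ℕ)
    (S : Finset V)
    (hcond : ∀ V' : Finset V, (∀ x ∈ V', x ∉ M) → V'.card ≤ k - 1 →
        ∀ v ∈ S, v ∉ V' → ∃ m ∈ M, ∃ w : G.Walk v m, ∀ x ∈ w.support, x ∉ V')
    (F1 F2 : Finset V) (hF1M : ∀ x ∈ F1, x ∉ M)
    (h1 : F1.card ≤ k)
    (v : V) (hvS : v ∈ S) (hv1 : v ∈ F1) (hv2 : v ∉ F2) :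
    capDistinguishable G M F1 F2 := by
  -- apply the condition with V' = F1 ∩ F2
  have hsub : F1 ∩ F2 ⊆ F1.erase v := by
    intro x hx
    rw [mem_inter] at hx
    rw [mem_erase]
    exact ⟨fun h => hv2 (h ▸ hx.2), hx.1⟩
  have hcard : (F1 ∩ F2).card ≤ k - 1 := by
    have h1' := card_le_card hsub
    have h2' : (F1.erase v).card = F1.card - 1 := card_erase_of_mem hv1
    omega
  have hvV' : v ∉ F1 ∩ F2 := fun h => hv2 (mem_inter.mp h).2
  obtain ⟨m, hmM, w, hw⟩ := hcond (F1 ∩ F2)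
    (fun x hx => hF1M x (mem_inter.mp hx).1) hcard v hvS hvV'
  -- find the first vertex of F1 ∪ F2 on the reverse walk (from m to v)
  have hex : ∃ x ∈ w.reverse.support, x ∈ F1 ∪ F2 := by
    refine ⟨v, ?_, ?_⟩
    · rw [Walk.support_reverse, List.mem_reverse]; exact w.start_mem_support
    · exact mem_union_left _ hv1
  obtain ⟨x, hxU, w', hsub', huniq⟩ := exists_first_aux (· ∈ F1 ∪ F2) w.reverse hex
  -- vertices on w' not in F1 ∩ F2
  have hw' : ∀ y ∈ w'.support, y ∉ F1 ∩ F2 := by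
    intro y hy
    have := hsub' y hy
    rw [Walk.support_reverse, List.mem_reverse] at this
    exact hw y this
  -- the monitor-to-monitor walk: m → x → m
  refine ⟨m, hmM, m, hmM, w'.append w'.reverse, ?_⟩
  have hmem : ∀ y ∈ (w'.append w'.reverse).support, y ∈ w'.support := by
    intro y hy
    rw [Walk.support_append, List.mem_append] at hy
    rcases hy with hy | hy
    · exact hy
    · have := List.tail_subset _ hy
      rwa [Walk.support_reverse, List.mem_reverse] at this
  have hxs : x ∈ (w'.append w'.reverse).support := by
    rw [Walk.support_append, List.mem_append]
    exact Or.inl w'.end_mem_support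
  rcases mem_union.mp hxU with hx1 | hx2
  · left
    refine ⟨⟨x, hxs, hx1⟩, ?_⟩
    intro y hy hy2
    have hyU : y ∈ F1 ∪ F2 := mem_union_right _ hy2
    rw [huniq y (hmem y hy) hyU] at hy2
    exact hw' x (hmem x hxs) (mem_inter.mpr ⟨hx1, hy2⟩)
  · right
    refine ⟨⟨x, hxs, hx2⟩, ?_⟩
    intro y hy hy1
    have hyU : y ∈ F1 ∪ F2 := mem_union_left _ hy1
    rw [huniq y (hmem y hy) hyU] at hy1
    exact hw' x (hmem x hxs) (mem_inter.mpr ⟨hy1, hx2⟩)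

theorem capIdentifiable_iff_component_condition
    (G : SimpleGraph V) (hG : G.Connected) (M : Finset V) (hM : M.Nonempty)
    (S : Finset V) (hS : ∀ v ∈ S, v ∉ M) (k : ℕ) (hk : 1 ≤ k) :
    capIdentifiable G M k S ↔
      ∀ V' : Finset V, (∀ x ∈ V', x ∉ M) → V'.card ≤ k - 1 →
        ∀ v ∈ S, v ∉ V' → ∃ m ∈ M, ∃ w : G.Walk v m, ∀ x ∈ w.support, x ∉ V' := by
  constructor
  · -- identifiable → component condition
    intro hid V' hV'M hV'card v hvS hvV'
    have hdist : capDistinguishable G M (insert v V') V' := by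
      apply hid
      · intro x hx
        rcases mem_insert.mp hx with rfl | hx
        · exact hS x hvS
        · exact hV'M x hx
      · exact hV'M
      · have := card_insert_le v V'
        omega
      · omega
      · intro hEq
        have hv : v ∈ V' ∩ S := by
          rw [← hEq]
          exact mem_inter.mpr ⟨mem_insert_self v V', hvS⟩
        exact hvV' (mem_inter.mp hv).1
    obtain ⟨m1, hm1, m2, hm2, w, hcase⟩ := hdist
    rcases hcase with ⟨⟨x, hxs, hx1⟩, havoid⟩ | ⟨⟨x, hxs, hx2⟩, _⟩
    · -- x must be v
      have hxv : x = v := by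
        rcases mem_insert.mp hx1 with rfl | hx
        · rfl
        · exact absurd hx (havoid x hxs)
      have hvs : v ∈ w.support := hxv ▸ hxs
      refine ⟨m1, hm1, (w.takeUntil v hvs).reverse, ?_⟩
      intro y hy
      rw [Walk.support_reverse, List.mem_reverse] at hy
      exact havoid y (w.support_takeUntil_subset hvs hy)
    · -- impossible: a vertex in F2 = V' ⊆ F1
      exact absurd (mem_insert_of_mem hx2) (‹∀ x ∈ w.support, x ∉ insert v V'› x hxs)
  · -- component condition → identifiable
    intro hcond F1 F2 hF1M hF2M h1 h2 hne
    -- find v ∈ S in the symmetric difference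
    have : ∃ v ∈ S, (v ∈ F1 ∧ v ∉ F2) ∨ (v ∈ F2 ∧ v ∉ F1) := by
      by_contra hcon
      push_neg at hcon
      apply hne
      ext y
      simp only [mem_inter]
      by_cases hyS : y ∈ S
      · have := hcon y hyS
        tauto
      · tauto
    obtain ⟨v, hvS, hcase⟩ := this
    rcases hcase with ⟨hv1, hv2⟩ | ⟨hv2, hv1⟩
    · exact cap_aux G M k S hcond F1 F2 hF1M h1 v hvS hv1 hv2
    · obtain ⟨m1, hm1, m2, hm2, w, hw⟩ :=
        cap_aux G M k S hcond F2 F1 hF2M h2 v hvS hv2 hv1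
      exact ⟨m1, hm1, m2, hm2, w, hw.symm⟩
end

section
/- Equivalence of the component condition and vertex-cut condition on the auxiliary graph: each connected component of G − V' containing a node of S has a monitor, for every set V' of at most q non-monitors (q ≤ σ−1), if and only if Γ_{G*}(S, m') ≥ q+1, where G* is obtained from G by deleting all monitors, adding a single virtual monitor m', and joining m' to every non-monitor that neighbors some monitor in G. -/
open Finset SimpleGraph
open scoped Classical

variable {V : Type*} [Fintype V] [DecidableEq V]

/-- The auxiliary graph `G*`: delete all monitors, add a virtual monitor `none`,
and join it to every non-monitor adjacent to some monitor in `G`. -/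
def auxGraph (G : SimpleGraph V) (M : Finset V) :
    SimpleGraph (Option {x : V // x ∉ M}) where
  Adj a b :=
    match a, b with
    | some u, some v => G.Adj u.1 v.1
    | some u, none => ∃ m ∈ M, G.Adj u.1 m
    | none, some v => ∃ m ∈ M, G.Adj v.1 m
    | none, none => False
  symm := by
    constructor
    intro a b h
    cases a <;> cases b
    · exact h
    · exact h
    · exact h
    · exact G.symm.symm _ _ h
  loopless := by
    constructor
    intro a h
    cases a
    · exact h
    · exact G.loopless.irrefl _ h

/-- The size of a minimum (`s`,`t`)-vertex-cut: the minimum cardinality of a vertex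
set (excluding `s`, `t`) whose deletion destroys all `s`-`t` paths; if `s` and `t`
are adjacent it is defined as the number of vertices minus one. -/
noncomputable def cutCard {W : Type*} [Fintype W] (H : SimpleGraph W) (s t : W) : ℕ :=
  if H.Adj s t then Fintype.card W - 1
  else sInf {n | ∃ A : Finset W, s ∉ A ∧ t ∉ A ∧
        (∀ w : H.Walk s t, ∃ x ∈ w.support, x ∈ A) ∧ A.card = n}

-- Lemma A: aux walk → G walk
lemma auxToG' (G : SimpleGraph V) (M : Finset V) :
    ∀ (a c : Option {x : V // x ∉ M}) (w : (auxGraph G M).Walk a c), c = none →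
      ∀ (u : {x : V // x ∉ M}), a = some u →
      ∃ m ∈ M, ∃ p : G.Walk u.1 m,
        ∀ x ∈ p.support, x ∈ M ∨ ∃ hx : x ∉ M, (some ⟨x, hx⟩ : Option _) ∈ w.support := by
  intro a c w
  induction w with
  | nil => intro hc u hu; subst hc; exact absurd hu (by simp)
  | cons h w ih =>
    rename_i a b _
    intro hc u hu
    subst hc; subst hu
    match b, h with
    | none, h =>
      obtain ⟨m, hm, hadj⟩ := h
      exact ⟨m, hm, SimpleGraph.Walk.cons hadj SimpleGraph.Walk.nil, by
        intro x hx
        simp only [SimpleGraph.Walk.support_cons, SimpleGraph.Walk.support_nil,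
          List.mem_cons, List.mem_singleton] at hx
        rcases hx with rfl | hx
        · exact Or.inr ⟨u.2, by simp⟩
        · rcases hx with rfl | h; · exact Or.inl hm
          · exact absurd h (by simp)⟩
    | some u', h =>
      obtain ⟨m, hm, p, hp⟩ := ih rfl u' rfl
      refine ⟨m, hm, SimpleGraph.Walk.cons h p, ?_⟩
      intro x hx
      change x ∈ u.1 :: p.support at hx
      simp only [SimpleGraph.Walk.support_cons, List.mem_cons] at hx
      rcases hx with rfl | hx
      · exact Or.inr ⟨u.2, by simp⟩
      · rcases hp x hx with h1 | ⟨hx', h2⟩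
        · exact Or.inl h1
        · exact Or.inr ⟨hx', by simp [h2]⟩

-- Lemma B: G walk → aux walk
lemma gToAux (G : SimpleGraph V) (M : Finset V) :
    ∀ (v m : V) (p : G.Walk v m) (hv : v ∉ M), m ∈ M →
      ∃ w : (auxGraph G M).Walk (some ⟨v, hv⟩) none,
        ∀ x, ∀ hx : x ∉ M, (some ⟨x, hx⟩ : Option _) ∈ w.support → x ∈ p.support := by
  intro v m p
  induction p with
  | nil => intro hv hm; exact absurd hm hv
  | cons h p ih =>
    rename_i v b m
    intro hv hm
    by_cases hb : b ∈ M
    · refine ⟨SimpleGraph.Walk.cons (show (auxGraph G M).Adj (some ⟨v, hv⟩) none from ⟨b, hb, h⟩)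
        SimpleGraph.Walk.nil, ?_⟩
      intro x hx hmem
      simp only [SimpleGraph.Walk.support_cons, SimpleGraph.Walk.support_nil,
        List.mem_cons, List.mem_singleton] at hmem
      rcases hmem with heq | hmem
      · simp only [Option.some.injEq, Subtype.mk.injEq] at heq
        subst heq; simp
      · rcases hmem with heq | hf
        · exact absurd heq (by simp)
        · exact absurd hf (by simp)
    · obtain ⟨w, hw⟩ := ih hb hm
      refine ⟨SimpleGraph.Walk.cons (show (auxGraph G M).Adj (some ⟨v, hv⟩) (some ⟨b, hb⟩) from h)
        w, ?_⟩
      intro x hx hmem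
      simp only [SimpleGraph.Walk.support_cons, List.mem_cons] at hmem
      rcases hmem with heq | hmem
      · simp only [Option.some.injEq, Subtype.mk.injEq] at heq
        subst heq; simp
      · simp only [SimpleGraph.Walk.support_cons, List.mem_cons]
        exact Or.inr (hw x hx hmem)

theorem component_condition_iff_cut
    (G : SimpleGraph V) (hG : G.Connected) (M : Finset V)
    (S : Finset V) (hS : ∀ v ∈ S, v ∉ M) (q : ℕ)
    (hq : q + 1 ≤ Fintype.card V - M.card) :
    (∀ V' : Finset V, (∀ x ∈ V', x ∉ M) → V'.card ≤ q →
        ∀ v ∈ S, v ∉ V' → ∃ m ∈ M, ∃ w : G.Walk v m, ∀ x ∈ w.support, x ∉ V')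
    ↔ (∀ v : {x : V // x ∉ M}, v.1 ∈ S →
        q + 1 ≤ cutCard (auxGraph G M) (some v) none) := by
  have hcard : Fintype.card {x : V // x ∉ M} = Fintype.card V - M.card := by
    have := Fintype.card_subtype_compl (fun x : V => x ∈ M)
    simpa [Fintype.card_subtype] using this
  constructor
  · intro hLHS v hvS
    unfold cutCard
    split
    · -- adjacent case
      rw [Fintype.card_option, hcard]
      omega
    · rename_i hnadj
      set T : Set ℕ := {n | ∃ A : Finset (Option {x : V // x ∉ M}),
        (some v) ∉ A ∧ none ∉ A ∧
        (∀ w : (auxGraph G M).Walk (some v) none, ∃ x ∈ w.support, x ∈ A) ∧ A.card = n} with hT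
      -- T is nonempty
      have hne : T.Nonempty := by
        refine ⟨_, (Finset.univ.erase (some v)).erase none, by simp, by simp, ?_, rfl⟩
        intro w
        cases w with
        | cons h w =>
          rename_i b
          refine ⟨b, by simp, ?_⟩
          have hb1 : b ≠ some v := fun hb => by
            subst hb; exact (auxGraph G M).loopless.irrefl _ h
          have hb2 : b ≠ none := fun hb => by subst hb; exact hnadj h
          simp [hb1, hb2]
      obtain ⟨A, hsA, htA, hcut, hcA⟩ := Nat.sInf_mem hne
      by_contra hlt
      push_neg at hlt
      rw [← hcA] at hlt
      -- build V'
      set V' : Finset V := A.image (fun a => (a.getD v).1) with hV'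
      have hV'M : ∀ x ∈ V', x ∉ M := by
        intro x hx
        simp only [hV', Finset.mem_image] at hx
        obtain ⟨a, ha, hax⟩ := hx
        match a with
        | none => exact absurd ha htA
        | some u => rw [← hax]; exact u.2
      have hV'card : V'.card ≤ q := le_trans (Finset.card_image_le) (by omega)
      have hvV' : v.1 ∉ V' := by
        simp only [hV', Finset.mem_image]
        rintro ⟨a, ha, hax⟩
        match a with
        | none => exact htA ha
        | some u =>
          have : u = v := Subtype.ext hax
          subst this; exact hsA ha
      obtain ⟨m, hm, p, hp⟩ := hLHS V' hV'M hV'card v.1 hvS hvV'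
      obtain ⟨w, hw⟩ := gToAux G M v.1 m p v.2 hm
      obtain ⟨x, hxw, hxA⟩ := hcut w
      match x with
      | none => exact htA hxA
      | some u =>
        have hup : u.1 ∈ p.support := hw u.1 u.2 (by simpa using hxw)
        have : u.1 ∈ V' := by
          simp only [hV', Finset.mem_image]
          exact ⟨some u, hxA, rfl⟩
        exact hp u.1 hup this
  · intro hRHS V' hV'M hV'card v hvS hvV'
    have hv : v ∉ M := hS v hvS
    have hcc := hRHS ⟨v, hv⟩ hvS
    unfold cutCard at hcc
    split at hcc
    · rename_i hadj
      obtain ⟨m, hm, hadj'⟩ := hadj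
      refine ⟨m, hm, SimpleGraph.Walk.cons hadj' SimpleGraph.Walk.nil, ?_⟩
      intro x hx
      simp only [SimpleGraph.Walk.support_cons, SimpleGraph.Walk.support_nil,
        List.mem_cons, List.mem_singleton] at hx
      rcases hx with rfl | hx
      · exact hvV'
      · rcases hx with rfl | hf
        · exact fun hmem => hV'M x hmem hm
        · exact absurd hf (by simp)
    · set A : Finset (Option {x : V // x ∉ M}) :=
        V'.attach.image (fun x => (some ⟨x.1, hV'M x.1 x.2⟩ : Option {x : V // x ∉ M})) with hA
      have hAcard : A.card ≤ q :=
        le_trans Finset.card_image_le (by simpa using hV'card)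
      have hsA : (some ⟨v, hv⟩ : Option {x : V // x ∉ M}) ∉ A := by
        simp only [hA, Finset.mem_image, Finset.mem_attach, true_and]
        rintro ⟨a, ha⟩
        simp only [Option.some.injEq, Subtype.mk.injEq] at ha
        exact hvV' (ha ▸ a.2)
      have htA : (none : Option {x : V // x ∉ M}) ∉ A := by
        simp [hA]
      have hncut : ¬ (∀ w : (auxGraph G M).Walk (some ⟨v, hv⟩) none, ∃ x ∈ w.support, x ∈ A) := by
        intro hcut
        have : A.card ∈ {n | ∃ A : Finset (Option {x : V // x ∉ M}),
            (some ⟨v, hv⟩) ∉ A ∧ none ∉ A ∧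
            (∀ w : (auxGraph G M).Walk (some ⟨v, hv⟩) none, ∃ x ∈ w.support, x ∈ A) ∧
            A.card = n} := ⟨A, hsA, htA, hcut, rfl⟩
        have := Nat.sInf_le this
        omega
      push_neg at hncut
      obtain ⟨w, hw⟩ := hncut
      obtain ⟨m, hm, p, hp⟩ := auxToG' G M (some ⟨v, hv⟩) none w rfl ⟨v, hv⟩ rfl
      refine ⟨m, hm, p, ?_⟩
      intro x hx hxV'
      rcases hp x hx with hxM | ⟨hxM, hxw⟩
      · exact hV'M x hxV' hxM
      · refine hw _ hxw ?_
        simp only [hA, Finset.mem_image, Finset.mem_attach, true_and]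
        exact ⟨⟨x, hxV'⟩, rfl⟩
end

section
/- Sufficient condition under CSP: if for every node set V' containing at most one monitor and at most k+1 nodes total, every connected component of G − V' containing a node of S also contains a monitor, then S is k-identifiable under CSP. -/
open Finset SimpleGraph
open scoped Classical

variable {V : Type*} [Fintype V] [DecidableEq V]

/-- Two failure sets of non-monitors are distinguishable under CSP if some simple
path between two distinct monitors intersects exactly one of them. -/
def cspDistinguishable (G : SimpleGraph V) (M : Finset V) (F1 F2 : Finset V) : Prop :=
  ∃ m1 ∈ M, ∃ m2 ∈ M, m1 ≠ m2 ∧ ∃ w : G.Walk m1 m2, w.IsPath ∧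
    (((∃ x ∈ w.support, x ∈ F1) ∧ ∀ x ∈ w.support, x ∉ F2) ∨
     ((∃ x ∈ w.support, x ∈ F2) ∧ ∀ x ∈ w.support, x ∉ F1))

/-- `S` is `k`-identifiable under CSP. -/
def cspIdentifiable (G : SimpleGraph V) (M : Finset V) (k : ℕ) (S : Finset V) : Prop :=
  ∀ F1 F2 : Finset V, (∀ x ∈ F1, x ∉ M) → (∀ x ∈ F2, x ∉ M) →
    F1.card ≤ k → F2.card ≤ k → F1 ∩ S ≠ F2 ∩ S → cspDistinguishable G M F1 F2

namespace CSPAux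

/-- Truncation of a walk at its first vertex belonging to `Y`. -/
lemma prefix_until {K : SimpleGraph V} {s t : V} (w : K.Walk s t) (Y : Finset V)
    (hY : ∃ x ∈ w.support, x ∈ Y) :
    ∃ x, x ∈ Y ∧ ∃ w' : K.Walk s x, w'.support <+: w.support ∧
      ∀ z ∈ w'.support, z ∈ Y → z = x := by
  induction w with
  | nil =>
    obtain ⟨x, hx, hxY⟩ := hY
    simp only [Walk.support_nil, List.mem_singleton] at hx
    subst hx
    exact ⟨_, hxY, Walk.nil, List.prefix_rfl, fun z hz _ => by simpa using hz⟩
  | @cons a b t hadj q ih =>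
    by_cases ha : a ∈ Y
    · refine ⟨a, ha, Walk.nil, ⟨q.support, by simp⟩, by simp⟩
    · have hq : ∃ x ∈ q.support, x ∈ Y := by
        obtain ⟨x, hx, hxY⟩ := hY
        rw [Walk.support_cons, List.mem_cons] at hx
        rcases hx with rfl | hx
        · exact absurd hxY ha
        · exact ⟨x, hx, hxY⟩
      obtain ⟨x, hxY, w', hpre, honly⟩ := ih hq
      obtain ⟨r, hr⟩ := hpre
      refine ⟨x, hxY, Walk.cons hadj w', ⟨r, by simp [hr]⟩, ?_⟩
      intro z hz hzY
      rw [Walk.support_cons, List.mem_cons] at hz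
      rcases hz with rfl | hz
      · exact absurd hzY ha
      · exact honly z hz hzY

/-- Graph obtained by deleting all edges incident to a vertex set. -/
def delSet (K : SimpleGraph V) (F : Finset V) : SimpleGraph V where
  Adj a b := K.Adj a b ∧ a ∉ F ∧ b ∉ F
  symm := ⟨fun a b ⟨h, ha, hb⟩ => ⟨h.symm, hb, ha⟩⟩
  loopless := ⟨fun a ⟨h, _, _⟩ => K.loopless.irrefl a h⟩

lemma delSet_le (K : SimpleGraph V) (F : Finset V) : delSet K F ≤ K := fun _ _ h => h.1

lemma walk_to_delSet {K : SimpleGraph V} {F : Finset V} {a b : V} (w : K.Walk a b)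
    (hw : ∀ x ∈ w.support, x ∉ F) :
    ∃ w' : (delSet K F).Walk a b, w'.support = w.support := by
  have hedges : ∀ f ∈ w.edges, f ∈ (delSet K F).edgeSet := by
    intro f hf
    induction f using Sym2.ind with
    | _ c d =>
      rw [SimpleGraph.mem_edgeSet]
      exact ⟨w.edges_subset_edgeSet hf, hw _ (w.fst_mem_support_of_mem_edges hf),
        hw _ (w.snd_mem_support_of_mem_edges hf)⟩
  exact ⟨w.transfer _ hedges, w.support_transfer hedges⟩

lemma delSet_support_not_mem {K : SimpleGraph V} {F : Finset V} {a b : V}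
    (w : (delSet K F).Walk a b) (ha : a ∉ F) : ∀ x ∈ w.support, x ∉ F := by
  induction w with
  | nil => simpa using ha
  | @cons a c t hadj q ih =>
    intro x hx
    rw [Walk.support_cons, List.mem_cons] at hx
    rcases hx with rfl | hx
    · exact ha
    · exact ih hadj.2.2 x hx

lemma transfer_le {K K' : SimpleGraph V} (hle : K ≤ K') {a b : V} (w : K.Walk a b) :
    ∀ f ∈ w.edges, f ∈ K'.edgeSet :=
  fun f hf => edgeSet_mono hle (w.edges_subset_edgeSet hf)

/-- Gluing two disjoint left pieces and two disjoint right pieces into two disjoint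
S-T paths; the `A` pieces meet exactly at `u0`, the `B` pieces are joined by an edge. -/
lemma glue {K H' : SimpleGraph V} (hle : H' ≤ K) {sA sB tA tB u0 a b : V}
    (LA : H'.Walk sA u0) (LB : H'.Walk sB a) (RA : H'.Walk u0 tA) (RB : H'.Walk b tB)
    (hadj : K.Adj a b)
    (hLA : LA.IsPath) (hLB : LB.IsPath) (hRA : RA.IsPath) (hRB : RB.IsPath)
    (hLL : ∀ z ∈ LA.support, z ∉ LB.support)
    (hRR : ∀ z ∈ RA.support, z ∉ RB.support)
    (hAA : ∀ z ∈ LA.support, z ∈ RA.support → z = u0)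
    (hAB : ∀ z ∈ LA.support, z ∉ RB.support)
    (hBA : ∀ z ∈ LB.support, z ∉ RA.support)
    (hBB : ∀ z ∈ LB.support, z ∉ RB.support) :
    ∃ (p1 : K.Walk sA tA) (p2 : K.Walk sB tB), p1.IsPath ∧ p2.IsPath ∧
      ∀ x ∈ p1.support, x ∉ p2.support := by
  refine ⟨(LA.append RA).transfer K (transfer_le hle _),
    (LB.transfer K (transfer_le hle _)).append
      (Walk.cons hadj (RB.transfer K (transfer_le hle _))), ?_, ?_, ?_⟩
  · rw [Walk.isPath_def, Walk.support_transfer, Walk.support_append, List.nodup_append]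
    refine ⟨hLA.support_nodup, ?_, ?_⟩
    · have := hRA.support_nodup
      rw [RA.support_eq_cons] at this
      exact this.of_cons
    · intro z hzL z' hzR hzz
      rw [← hzz] at hzR
      have hzR' : z ∈ RA.support := List.mem_of_mem_tail hzR
      have hzu : z = u0 := hAA z hzL hzR'
      subst hzu
      have := hRA.support_nodup
      rw [RA.support_eq_cons] at this
      exact (List.nodup_cons.mp this).1 hzR
  · rw [Walk.isPath_def, Walk.support_append, Walk.support_transfer,
      Walk.support_cons, List.tail_cons, Walk.support_transfer, List.nodup_append]
    exact ⟨hLB.support_nodup, hRB.support_nodup, fun z hzL z' hzR hzz => hBB z hzL (hzz ▸ hzR)⟩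
  · intro x hx
    rw [Walk.support_transfer, Walk.support_append] at hx
    rw [Walk.support_append, Walk.support_transfer, Walk.support_cons, List.tail_cons,
      Walk.support_transfer]
    intro hx2
    rw [List.mem_append] at hx hx2
    have hx' : x ∈ LA.support ∨ x ∈ RA.support := by
      rcases hx with hx | hx
      · exact Or.inl hx
      · exact Or.inr (List.mem_of_mem_tail hx)
    rcases hx' with hx' | hx' <;> rcases hx2 with hx2 | hx2
    · exact hLL x hx' hx2
    · exact hAB x hx' hx2
    · exact hBA x hx2 hx'
    · exact hRR x hx' hx2

/-- Menger's theorem for two disjoint paths (vertex version), between vertex sets. -/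
lemma menger2 : ∀ (n : ℕ) (K : SimpleGraph V) (S T : Finset V),
    K.edgeSet.ncard ≤ n → Nonempty V →
    (∀ u : V, ∃ s ∈ S, ∃ t ∈ T, ∃ w : K.Walk s t, u ∉ w.support) →
    ∃ s1 ∈ S, ∃ t1 ∈ T, ∃ s2 ∈ S, ∃ t2 ∈ T,
      ∃ (p1 : K.Walk s1 t1) (p2 : K.Walk s2 t2), p1.IsPath ∧ p2.IsPath ∧
        ∀ x ∈ p1.support, x ∉ p2.support := by
  intro n
  induction n using Nat.strong_induction_on with
  | _ n ih =>
  intro K S T hcard hV hyp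
  by_cases hST : ∃ z ∈ S, z ∈ T
  · obtain ⟨z, hzS, hzT⟩ := hST
    obtain ⟨s, hs, t, ht, w, hw⟩ := hyp z
    refine ⟨z, hzS, z, hzT, s, hs, t, ht, Walk.nil, w.bypass, Walk.IsPath.nil,
      w.bypass_isPath, ?_⟩
    intro x hx
    simp only [Walk.support_nil, List.mem_singleton] at hx
    subst hx
    exact fun hc => hw (w.support_bypass_subset hc)
  · push_neg at hST
    by_cases hedge : ∃ f : Sym2 V, f ∈ K.edgeSet
    swap
    · exfalso
      obtain ⟨s, hs, t, ht, w, -⟩ := hyp (Classical.arbitrary V)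
      cases w with
      | nil => exact hST s hs ht
      | cons hadj q => exact hedge ⟨_, (SimpleGraph.mem_edgeSet K).mpr hadj⟩
    obtain ⟨y0, y1, hadj⟩ : ∃ y0 y1, K.Adj y0 y1 := by
      obtain ⟨f, hf⟩ := hedge
      revert hf
      refine Sym2.ind ?_ f
      intro y0 y1 hf
      exact ⟨y0, y1, hf⟩
    have hne01 : y0 ≠ y1 := hadj.ne
    set H' : SimpleGraph V := K.deleteEdges {s(y0, y1)} with hH'
    have hle : H' ≤ K := K.deleteEdges_le _
    have heq : H'.edgeSet.ncard + 1 = K.edgeSet.ncard := by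
      rw [hH', edgeSet_deleteEdges]
      exact Set.ncard_diff_singleton_add_one hadj (K.edgeSet.toFinite)
    have hlt : H'.edgeSet.ncard < n := by omega
    -- transfer of walks avoiding the deleted edge
    have htrans : ∀ {c d : V} (w : K.Walk c d), s(y0, y1) ∉ w.edges →
        ∃ w' : H'.Walk c d, w'.support = w.support := by
      intro c d w he
      have hsub : ∀ f ∈ w.edges, f ∈ H'.edgeSet := by
        intro f hf
        rw [hH', edgeSet_deleteEdges]
        refine ⟨w.edges_subset_edgeSet hf, ?_⟩
        simp only [Set.mem_singleton_iff]
        rintro rfl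
        exact he hf
      exact ⟨w.transfer _ hsub, w.support_transfer hsub⟩
    by_cases hA : ∀ u : V, ∃ s ∈ S, ∃ t ∈ T, ∃ w : H'.Walk s t, u ∉ w.support
    · obtain ⟨s1, hs1, t1, ht1, s2, hs2, t2, ht2, p1, p2, hp1, hp2, hdisj⟩ :=
        ih _ hlt H' S T le_rfl hV hA
      refine ⟨s1, hs1, t1, ht1, s2, hs2, t2, ht2, p1.transfer K (transfer_le hle _),
        p2.transfer K (transfer_le hle _), ?_, ?_, ?_⟩
      · rw [Walk.isPath_def, Walk.support_transfer]; exact hp1.support_nodup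
      · rw [Walk.isPath_def, Walk.support_transfer]; exact hp2.support_nodup
      · intro x hx
        rw [Walk.support_transfer] at hx ⊢
        exact hdisj x hx
    · push_neg at hA
      obtain ⟨u0, hu0⟩ := hA
      have hcut : ∀ {s t : V}, s ∈ S → t ∈ T → ∀ w : H'.Walk s t, u0 ∈ w.support :=
        fun hs ht w => hu0 _ hs _ ht w
      have huse : ∀ {s t : V} (w : K.Walk s t), s ∈ S → t ∈ T → u0 ∉ w.support →
          s(y0, y1) ∈ w.edges := by
        intro s t w hs ht hu
        by_contra he
        obtain ⟨w', hw'⟩ := htrans w he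
        exact hu (hw' ▸ hcut hs ht w')
      have hu0y0 : u0 ≠ y0 := by
        rintro rfl
        obtain ⟨s, hs, t, ht, w, hw⟩ := hyp u0
        exact hw (w.fst_mem_support_of_mem_edges (huse w hs ht hw))
      have hu0y1 : u0 ≠ y1 := by
        rintro rfl
        obtain ⟨s, hs, t, ht, w, hw⟩ := hyp u0
        exact hw (w.snd_mem_support_of_mem_edges (huse w hs ht hw))
      set Y : Finset V := {u0, y0, y1} with hY
      have hYu0 : u0 ∈ Y := by simp [hY]
      have hYy0 : y0 ∈ Y := by simp [hY]
      have hYy1 : y1 ∈ Y := by simp [hY]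
      -- every S-T walk in K hits Y
      have hhit : ∀ {s t : V} (w : K.Walk s t), s ∈ S → t ∈ T →
          ∃ x ∈ w.support, x ∈ Y := by
        intro s t w hs ht
        by_cases he : s(y0, y1) ∈ w.edges
        · exact ⟨y0, w.fst_mem_support_of_mem_edges he, hYy0⟩
        · obtain ⟨w', hw'⟩ := htrans w he
          exact ⟨u0, hw' ▸ hcut hs ht w', hYu0⟩
      -- a truncated walk with a single Y-vertex avoids the deleted edge
      have honly_noedge : ∀ {c x : V} (w' : K.Walk c x),
          (∀ z ∈ w'.support, z ∈ Y → z = x) → s(y0, y1) ∉ w'.edges := by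
        intro c x w' honly he
        have h0 := honly y0 (w'.fst_mem_support_of_mem_edges he) hYy0
        have h1 := honly y1 (w'.snd_mem_support_of_mem_edges he) hYy1
        exact hne01 (h0.trans h1.symm)
      -- hypothesis for the left recursion
      have hypL : ∀ u : V, ∃ s ∈ S, ∃ x ∈ Y, ∃ w : H'.Walk s x, u ∉ w.support := by
        intro u
        obtain ⟨s, hs, t, ht, w, hw⟩ := hyp u
        obtain ⟨x, hxY, w', hpre, honly⟩ := prefix_until w Y (hhit w hs ht)
        obtain ⟨w'', hw''⟩ := htrans w' (honly_noedge w' honly)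
        refine ⟨s, hs, x, hxY, w'', ?_⟩
        rw [hw'']
        exact fun hc => hw (hpre.subset hc)
      -- hypothesis for the right recursion
      have hypR : ∀ u : V, ∃ x ∈ Y, ∃ t ∈ T, ∃ w : H'.Walk x t, u ∉ w.support := by
        intro u
        obtain ⟨s, hs, t, ht, w, hw⟩ := hyp u
        have hhit' : ∃ x ∈ w.reverse.support, x ∈ Y := by
          obtain ⟨x, hx, hxY⟩ := hhit w hs ht
          exact ⟨x, by rw [Walk.support_reverse]; exact List.mem_reverse.mpr hx, hxY⟩
        obtain ⟨x, hxY, w', hpre, honly⟩ := prefix_until w.reverse Y hhit'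
        obtain ⟨w'', hw''⟩ := htrans w' (honly_noedge w' honly)
        refine ⟨x, hxY, t, ht, w''.reverse, ?_⟩
        rw [Walk.support_reverse, List.mem_reverse, hw'']
        intro hc
        have := hpre.subset hc
        rw [Walk.support_reverse, List.mem_reverse] at this
        exact hw this
      obtain ⟨sL1, hsL1, a1, ha1, sL2, hsL2, a2, ha2, L1, L2, hL1, hL2, hdL⟩ :=
        ih _ hlt H' S Y le_rfl hV hypL
      obtain ⟨b1, hb1, t1, ht1, b2, hb2, t2, ht2, R1, R2, hR1, hR2, hdR⟩ :=
        ih _ hlt H' Y T le_rfl hV hypR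
      -- trim the lefts so that only their endpoint lies in Y
      have trimL : ∀ {s x : V} (L : H'.Walk s x), x ∈ Y → L.IsPath →
          ∃ x', x' ∈ Y ∧ ∃ L' : H'.Walk s x', L'.IsPath ∧
            (∀ z ∈ L'.support, z ∈ L.support) ∧ (∀ z ∈ L'.support, z ∈ Y → z = x') := by
        intro s x L hx hp
        obtain ⟨x', hx', L', hpre, honly⟩ := prefix_until L Y ⟨x, L.end_mem_support, hx⟩
        exact ⟨x', hx', L', (Walk.isPath_def _).mpr (hp.support_nodup.sublist hpre.sublist),
          fun z hz => hpre.subset hz, honly⟩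
      have trimR : ∀ {x t : V} (R : H'.Walk x t), x ∈ Y → R.IsPath →
          ∃ x', x' ∈ Y ∧ ∃ R' : H'.Walk x' t, R'.IsPath ∧
            (∀ z ∈ R'.support, z ∈ R.support) ∧ (∀ z ∈ R'.support, z ∈ Y → z = x') := by
        intro x t R hx hp
        obtain ⟨x', hx', q, hpre, honly⟩ := prefix_until R.reverse Y
          ⟨x, by rw [Walk.support_reverse]; exact List.mem_reverse.mpr R.start_mem_support, hx⟩
        have hq : q.IsPath := (Walk.isPath_def _).mpr
          (hp.reverse.support_nodup.sublist hpre.sublist)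
        refine ⟨x', hx', q.reverse, hq.reverse, ?_, ?_⟩
        · intro z hz
          rw [Walk.support_reverse, List.mem_reverse] at hz
          have := hpre.subset hz
          rw [Walk.support_reverse, List.mem_reverse] at this
          exact this
        · intro z hz hzY
          rw [Walk.support_reverse, List.mem_reverse] at hz
          exact honly z hz hzY
      obtain ⟨a1', ha1', L1', hL1', hsub1, honly1⟩ := trimL L1 ha1 hL1
      obtain ⟨a2', ha2', L2', hL2', hsub2, honly2⟩ := trimL L2 ha2 hL2
      obtain ⟨b1', hb1', R1', hR1', rsub1, ronly1⟩ := trimR R1 hb1 hR1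
      obtain ⟨b2', hb2', R2', hR2', rsub2, ronly2⟩ := trimR R2 hb2 hR2
      have hdL' : ∀ z ∈ L1'.support, z ∉ L2'.support :=
        fun z h1 h2 => hdL z (hsub1 z h1) (hsub2 z h2)
      have hdR' : ∀ z ∈ R1'.support, z ∉ R2'.support :=
        fun z h1 h2 => hdR z (rsub1 z h1) (rsub2 z h2)
      have ha12 : a1' ≠ a2' := by
        intro hc
        exact hdL a1' (hsub1 _ L1'.end_mem_support) (hsub2 _ (hc ▸ L2'.end_mem_support))
      have hb12 : b1' ≠ b2' := by
        intro hc
        exact hdR b1' (rsub1 _ R1'.start_mem_support) (rsub2 _ (hc ▸ R2'.start_mem_support))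
      -- the key fact: a common vertex of a trimmed left and right forces u0
      have factC : ∀ {s x x' t : V} (L : H'.Walk s x) (R : H'.Walk x' t),
          s ∈ S → t ∈ T → L.IsPath → R.IsPath →
          (∀ z ∈ L.support, z ∈ Y → z = x) → (∀ z ∈ R.support, z ∈ Y → z = x') →
          ∀ z, z ∈ L.support → z ∈ R.support → z = u0 ∧ x = u0 ∧ x' = u0 := by
        intro s x x' t L R hs ht hLp hRp honlyL honlyR z hzL hzR
        have hcomp := hcut hs ht ((L.takeUntil z hzL).append (R.dropUntil z hzR))
        rw [Walk.mem_support_append_iff] at hcomp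
        rcases hcomp with hc | hc
        · have hu0L : u0 ∈ L.support := L.support_takeUntil_subset hzL hc
          have hxu : x = u0 := (honlyL u0 hu0L hYu0).symm
          -- u0 is the endpoint of L, so it can only be in the take part if z = u0
          have hnd := hLp.support_nodup
          have hsupp : L.support = (L.takeUntil z hzL).support
              ++ (L.dropUntil z hzL).support.tail := by
            rw [← Walk.support_append, Walk.take_spec]
          rw [hsupp, List.nodup_append] at hnd
          have hend : u0 ∈ (L.dropUntil z hzL).support := by
            rw [← hxu]; exact Walk.end_mem_support _
          rw [Walk.support_eq_cons, List.mem_cons] at hend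
          rcases hend with hend | hend
          · have hz' : z = u0 := hend.symm
            exact ⟨hz', hxu, ((honlyR z hzR (by rw [hz']; exact hYu0)).symm).trans hz'⟩
          · exact absurd hend (fun h => hnd.2.2 u0 hc u0 h rfl)
        · have hu0R : u0 ∈ R.support := R.support_dropUntil_subset hzR hc
          have hxu : x' = u0 := (honlyR u0 hu0R hYu0).symm
          have hnd := hRp.support_nodup
          have hsupp : R.support = (R.takeUntil z hzR).support
              ++ (R.dropUntil z hzR).support.tail := by
            rw [← Walk.support_append, Walk.take_spec]
          rw [hsupp, List.nodup_append] at hnd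
          have hstart : u0 ∈ (R.takeUntil z hzR).support := by
            rw [← hxu]; exact Walk.start_mem_support _
          rw [Walk.support_eq_cons, List.mem_cons] at hc
          rcases hc with hc | hc
          · have hz' : z = u0 := hc.symm
            exact ⟨hz', ((honlyL z hzL (by rw [hz']; exact hYu0)).symm).trans hz', hxu⟩
          · exact absurd hc (fun h => hnd.2.2 u0 hstart u0 h rfl)
      -- pigeonhole: some left endpoint equals some right endpoint
      have hYcard : Y.card = 3 := by
        have hm1 : u0 ∉ ({y0, y1} : Finset V) := by simp [hu0y0, hu0y1]
        have hm2 : y0 ∉ ({y1} : Finset V) := by simp [hne01]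
        rw [hY, Finset.card_insert_of_notMem hm1, Finset.card_insert_of_notMem hm2,
          Finset.card_singleton]
      have hmatch : a1' = b1' ∨ a1' = b2' ∨ a2' = b1' ∨ a2' = b2' := by
        by_contra hcon
        push_neg at hcon
        obtain ⟨n11, n12, n21, n22⟩ := hcon
        have hsubY : ({b1', b2'} : Finset V) ⊆ Y \ {a1', a2'} := by
          intro z hz
          simp only [Finset.mem_insert, Finset.mem_singleton] at hz
          simp only [Finset.mem_sdiff, Finset.mem_insert, Finset.mem_singleton]
          rcases hz with rfl | rfl
          · exact ⟨hb1', by rintro (rfl | rfl) <;> [exact n11 rfl; exact n21 rfl]⟩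
          · exact ⟨hb2', by rintro (rfl | rfl) <;> [exact n12 rfl; exact n22 rfl]⟩
        have h2 : ({b1', b2'} : Finset V).card = 2 := by
          rw [Finset.card_insert_of_notMem (by simp [hb12]), Finset.card_singleton]
        have hsdcard : (Y \ {a1', a2'}).card ≤ 1 := by
          have hsub2 : ({a1', a2'} : Finset V) ⊆ Y := by
            intro z hz
            simp only [Finset.mem_insert, Finset.mem_singleton] at hz
            rcases hz with rfl | rfl
            · exact ha1'
            · exact ha2'
          have h2' : ({a1', a2'} : Finset V).card = 2 := by
            rw [Finset.card_insert_of_notMem (by simp [ha12]), Finset.card_singleton]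
          rw [Finset.card_sdiff_of_subset hsub2, hYcard, h2']
        have := Finset.card_le_card hsubY
        omega
      -- the general finishing move
      have final : ∀ {sA tA sB tB xA xB x'A x'B : V}
          (hsA : sA ∈ S) (htA : tA ∈ T) (hsB : sB ∈ S) (htB : tB ∈ T)
          (hxA : xA ∈ Y) (hxB : xB ∈ Y) (hx'A : x'A ∈ Y) (hx'B : x'B ∈ Y)
          (LA : H'.Walk sA xA) (LB : H'.Walk sB xB)
          (RA : H'.Walk x'A tA) (RB : H'.Walk x'B tB),
          LA.IsPath → LB.IsPath → RA.IsPath → RB.IsPath →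
          (∀ z ∈ LA.support, z ∈ Y → z = xA) → (∀ z ∈ LB.support, z ∈ Y → z = xB) →
          (∀ z ∈ RA.support, z ∈ Y → z = x'A) → (∀ z ∈ RB.support, z ∈ Y → z = x'B) →
          (∀ z ∈ LA.support, z ∉ LB.support) → (∀ z ∈ RA.support, z ∉ RB.support) →
          xA ≠ xB → x'A ≠ x'B → xA = x'A →
          ∃ (p1 : K.Walk sA tA) (p2 : K.Walk sB tB), p1.IsPath ∧ p2.IsPath ∧
            ∀ x ∈ p1.support, x ∉ p2.support := by
        intro sA tA sB tB xA xB x'A x'B hsA htA hsB htB hxA hxB hx'A hx'B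
          LA LB RA RB hLAp hLBp hRAp hRBp honlyLA honlyLB honlyRA honlyRB
          hLLd hRRd hxAB hx'AB hmAA
        have hcA := factC LA RA hsA htA hLAp hRAp honlyLA honlyRA xA
          LA.end_mem_support (by rw [hmAA]; exact RA.start_mem_support)
        obtain ⟨-, hxAu, hx'Au⟩ := hcA
        have hxBu : xB ≠ u0 := fun hc => hxAB (hxAu.trans hc.symm)
        have hx'Bu : x'B ≠ u0 := fun hc => hx'AB (hx'Au.trans hc.symm)
        have hBne : xB ≠ x'B := by
          intro hc
          have := factC LB RB hsB htB hLBp hRBp honlyLB honlyRB xB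
            LB.end_mem_support (by rw [hc]; exact RB.start_mem_support)
          exact hxBu this.2.1
        have hxBy : xB = y0 ∨ xB = y1 := by
          simp only [hY, Finset.mem_insert, Finset.mem_singleton] at hxB
          rcases hxB with rfl | h | h
          · exact absurd rfl hxBu
          · exact Or.inl h
          · exact Or.inr h
        have hx'By : x'B = y0 ∨ x'B = y1 := by
          simp only [hY, Finset.mem_insert, Finset.mem_singleton] at hx'B
          rcases hx'B with rfl | h | h
          · exact absurd rfl hx'Bu
          · exact Or.inl h
          · exact Or.inr h
        have hadjB : K.Adj xB x'B := by
          rcases hxBy with h1 | h1 <;> rcases hx'By with h2 | h2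
          · exact absurd (h1.trans h2.symm) hBne
          · rw [h1, h2]; exact hadj
          · rw [h1, h2]; exact hadj.symm
          · exact absurd (h1.trans h2.symm) hBne
        subst hxAu
        subst hx'Au
        exact glue hle LA LB RA RB hadjB hLAp hLBp hRAp hRBp hLLd hRRd
          (fun z hz1 hz2 => (factC LA RA hsA htA hLAp hRAp honlyLA honlyRA z hz1 hz2).1)
          (fun z hz1 hz2 =>
            hx'Bu (factC LA RB hsA htB hLAp hRBp honlyLA honlyRB z hz1 hz2).2.2)
          (fun z hz1 hz2 =>
            hxBu (factC LB RA hsB htA hLBp hRAp honlyLB honlyRA z hz1 hz2).2.1)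
          (fun z hz1 hz2 =>
            hxBu (factC LB RB hsB htB hLBp hRBp honlyLB honlyRB z hz1 hz2).2.1)
      rcases hmatch with hm | hm | hm | hm
      · obtain ⟨p1, p2, h1, h2, hd⟩ := final hsL1 ht1 hsL2 ht2 ha1' ha2' hb1' hb2'
          L1' L2' R1' R2' hL1' hL2' hR1' hR2' honly1 honly2 ronly1 ronly2 hdL' hdR' ha12 hb12 hm
        exact ⟨sL1, hsL1, t1, ht1, sL2, hsL2, t2, ht2, p1, p2, h1, h2, hd⟩
      · obtain ⟨p1, p2, h1, h2, hd⟩ := final hsL1 ht2 hsL2 ht1 ha1' ha2' hb2' hb1'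
          L1' L2' R2' R1' hL1' hL2' hR2' hR1' honly1 honly2 ronly2 ronly1 hdL'
          (fun z h1 h2 => hdR' z h2 h1) ha12 hb12.symm hm
        exact ⟨sL1, hsL1, t2, ht2, sL2, hsL2, t1, ht1, p1, p2, h1, h2, hd⟩
      · obtain ⟨p1, p2, h1, h2, hd⟩ := final hsL2 ht1 hsL1 ht2 ha2' ha1' hb1' hb2'
          L2' L1' R1' R2' hL2' hL1' hR1' hR2' honly2 honly1 ronly1 ronly2
          (fun z h1 h2 => hdL' z h2 h1) hdR' ha12.symm hb12 hm
        exact ⟨sL2, hsL2, t1, ht1, sL1, hsL1, t2, ht2, p1, p2, h1, h2, hd⟩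
      · obtain ⟨p1, p2, h1, h2, hd⟩ := final hsL2 ht2 hsL1 ht1 ha2' ha1' hb2' hb1'
          L2' L1' R2' R1' hL2' hL1' hR2' hR1' honly2 honly1 ronly2 ronly1
          (fun z h1 h2 => hdL' z h2 h1) (fun z h1 h2 => hdR' z h2 h1)
          ha12.symm hb12.symm hm
        exact ⟨sL2, hsL2, t2, ht2, sL1, hsL1, t1, ht1, p1, p2, h1, h2, hd⟩

/-- From the component condition we extract, for any `v ∈ S` outside `F`,
a simple monitor-to-monitor path through `v` avoiding `F`. -/
lemma key (G : SimpleGraph V) (M : Finset V) (hM : 2 ≤ M.card) (k : ℕ) (S : Finset V)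
    (h : ∀ V' : Finset V, (V' ∩ M).card ≤ 1 → V'.card ≤ k + 1 →
        ∀ v ∈ S, v ∉ V' → ∃ m ∈ M, ∃ w : G.Walk v m, ∀ x ∈ w.support, x ∉ V')
    (F : Finset V) (hFM : ∀ x ∈ F, x ∉ M) (hFk : F.card ≤ k)
    (v : V) (hvS : v ∈ S) (hvM : v ∉ M) (hvF : v ∉ F) :
    ∃ m1 ∈ M, ∃ m2 ∈ M, m1 ≠ m2 ∧ ∃ w : G.Walk m1 m2, w.IsPath ∧ v ∈ w.support ∧
      ∀ x ∈ w.support, x ∉ F := by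
  set H0 := delSet G F with hH0
  set H1 := delSet H0 {v} with hH1
  have star : ∀ u : V, u ≠ v → ∃ m ∈ M, ∃ w : G.Walk v m,
      ∀ x ∈ w.support, x ∉ F ∧ x ≠ u := by
    intro u hu
    have hc1 : ((insert u F) ∩ M).card ≤ 1 := by
      have hsub : (insert u F) ∩ M ⊆ {u} := by
        intro x hx
        rw [Finset.mem_inter, Finset.mem_insert] at hx
        rcases hx.1 with rfl | hxF
        · exact Finset.mem_singleton_self _
        · exact absurd hx.2 (hFM x hxF)
      simpa using Finset.card_le_card hsub
    have hc2 : (insert u F).card ≤ k + 1 :=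
      le_trans (Finset.card_insert_le _ _) (by omega)
    have hvV : v ∉ insert u F := by
      rw [Finset.mem_insert]
      rintro (rfl | hc)
      · exact hu rfl
      · exact hvF hc
    obtain ⟨m, hm, w, hw⟩ := h (insert u F) hc1 hc2 v hvS hvV
    refine ⟨m, hm, w, fun x hx => ?_⟩
    have hx' := hw x hx
    rw [Finset.mem_insert] at hx'
    push_neg at hx'
    exact ⟨hx'.2, hx'.1⟩
  have split : ∀ {m : V} (p : H0.Walk v m), p.IsPath → v ≠ m →
      ∃ a, ∃ _ : H0.Adj v a, ∃ q : H0.Walk a m, q.IsPath ∧ v ∉ q.support ∧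
        ∀ x ∈ q.support, x ∈ p.support := by
    intro m p hp hvm
    cases p with
    | nil => exact absurd rfl hvm
    | cons hadj q =>
      rw [Walk.cons_isPath_iff] at hp
      exact ⟨_, hadj, q, hp.1, hp.2, fun x hx => by
        rw [Walk.support_cons]; exact List.mem_cons_of_mem _ hx⟩
  have tailW : ∀ u : V, u ≠ v → ∃ m ∈ M, ∃ a, H0.Adj v a ∧
      ∃ q : H1.Walk a m, u ∉ q.support := by
    intro u hu
    obtain ⟨m, hm, w, hw⟩ := star u hu
    obtain ⟨w0, hw0⟩ := walk_to_delSet (K := G) (F := F) w (fun x hx => (hw x hx).1)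
    have hvm : v ≠ m := fun hc => hvM (hc ▸ hm)
    obtain ⟨a, hadj, q, hq, hvq, hqsub⟩ := split w0.bypass w0.bypass_isPath hvm
    have hqsub' : ∀ x ∈ q.support, x ∈ w.support := by
      intro x hx
      have := hqsub x hx
      have := w0.support_bypass_subset this
      rwa [hw0] at this
    obtain ⟨q1, hq1⟩ := walk_to_delSet (K := H0) (F := {v}) q
      (fun x hx => by simp only [Finset.mem_singleton]; rintro rfl; exact hvq hx)
    refine ⟨m, hm, a, hadj, q1, ?_⟩
    rw [hq1]
    intro hc
    exact (hw u (hqsub' u hc)).2 rfl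
  classical
  set Snb : Finset V := Finset.univ.filter (fun a => H0.Adj v a) with hSnb
  obtain ⟨m0, hm0⟩ : M.Nonempty := Finset.card_pos.mp (by omega)
  have hm0v : m0 ≠ v := fun hc => hvM (hc ▸ hm0)
  have hyp : ∀ u : V, ∃ s ∈ Snb, ∃ t ∈ M, ∃ w : H1.Walk s t, u ∉ w.support := by
    intro u
    by_cases hu : u = v
    · obtain ⟨m, hm, a, hadj, q, _⟩ := tailW m0 hm0v
      refine ⟨a, by simp [hSnb, hadj], m, hm, q, ?_⟩
      subst hu
      intro hc
      exact delSet_support_not_mem q (by simp [hadj.ne']) u hc (by simp)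
    · obtain ⟨m, hm, a, hadj, q, hq⟩ := tailW u hu
      exact ⟨a, by simp [hSnb, hadj], m, hm, q, hq⟩
  obtain ⟨a1, ha1, m1, hm1, a2, ha2, m2, hm2, P1, P2, hP1, hP2, hd⟩ :=
    menger2 (H1.edgeSet.ncard) H1 Snb M le_rfl ⟨v⟩ hyp
  have ha1' : H0.Adj v a1 := by simpa [hSnb] using ha1
  have ha2' : H0.Adj v a2 := by simpa [hSnb] using ha2
  have hv1 : v ∉ P1.support := fun hc =>
    delSet_support_not_mem P1 (by simp [ha1'.ne']) v hc (by simp)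
  have hv2 : v ∉ P2.support := fun hc =>
    delSet_support_not_mem P2 (by simp [ha2'.ne']) v hc (by simp)
  have hFsupp : ∀ {a b : V} (w : H1.Walk a b), a ∉ F → ∀ x ∈ w.support, x ∉ F := by
    intro a b w ha
    induction w with
    | nil => simpa using ha
    | @cons a c t hadj q ih =>
      intro x hx
      rw [Walk.support_cons, List.mem_cons] at hx
      rcases hx with rfl | hx
      · exact ha
      · exact ih hadj.1.2.2 x hx
  have hF1 : ∀ x ∈ P1.support, x ∉ F := hFsupp P1 ha1'.2.2
  have hF2 : ∀ x ∈ P2.support, x ∉ F := hFsupp P2 ha2'.2.2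
  have hm12 : m1 ≠ m2 := fun hc =>
    hd m1 P1.end_mem_support (by rw [hc]; exact P2.end_mem_support)
  have hle2 : H1 ≤ G := fun a b hab => hab.1.1
  set P1G := P1.transfer G (transfer_le hle2 _) with hP1G
  set P2G := P2.transfer G (transfer_le hle2 _) with hP2G
  have hs1 : P1G.support = P1.support := P1.support_transfer _
  have hs2 : P2G.support = P2.support := P2.support_transfer _
  have hw1path : (Walk.cons ha1'.1 P1G).IsPath := by
    rw [Walk.cons_isPath_iff, Walk.isPath_def, hs1]
    exact ⟨hP1.support_nodup, hs1 ▸ hv1⟩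
  have hw2path : (Walk.cons ha2'.1 P2G).IsPath := by
    rw [Walk.cons_isPath_iff, Walk.isPath_def, hs2]
    exact ⟨hP2.support_nodup, hs2 ▸ hv2⟩
  refine ⟨m1, hm1, m2, hm2, hm12,
    (Walk.cons ha1'.1 P1G).reverse.append (Walk.cons ha2'.1 P2G), ?_, ?_, ?_⟩
  · rw [Walk.isPath_def]
    simp only [Walk.support_append, Walk.support_reverse, Walk.support_cons, List.tail_cons]
    rw [List.nodup_append]
    refine ⟨List.nodup_reverse.mpr (by simpa using hw1path.support_nodup),
      hs2 ▸ hP2.support_nodup, ?_⟩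
    intro z hz z' hz2 hzz
    rw [← hzz] at hz2
    rw [List.mem_reverse, List.mem_cons] at hz
    rw [hs2] at hz2
    rcases hz with rfl | hz
    · exact hv2 hz2
    · rw [hs1] at hz
      exact hd z hz hz2
  · rw [Walk.mem_support_append_iff]
    left
    rw [Walk.support_reverse, List.mem_reverse]
    exact Walk.start_mem_support _
  · intro x hx
    rw [Walk.mem_support_append_iff, Walk.support_reverse, List.mem_reverse] at hx
    rcases hx with hx | hx <;> rw [Walk.support_cons, List.mem_cons] at hx <;>
      rcases hx with rfl | hx
    · exact hvF
    · exact hF1 x (hs1 ▸ hx)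
    · exact hvF
    · exact hF2 x (hs2 ▸ hx)


end CSPAux

theorem cspIdentifiable_of_component_condition
    (G : SimpleGraph V) (hG : G.Connected) (M : Finset V) (hM : 2 ≤ M.card)
    (S : Finset V) (hS : ∀ v ∈ S, v ∉ M) (k : ℕ)
    (h : ∀ V' : Finset V, (V' ∩ M).card ≤ 1 → V'.card ≤ k + 1 →
        ∀ v ∈ S, v ∉ V' → ∃ m ∈ M, ∃ w : G.Walk v m, ∀ x ∈ w.support, x ∉ V') :
    cspIdentifiable G M k S := by
  intro F1 F2 hF1 hF2 hc1 hc2 hne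
  have hv : ∃ v ∈ S, (v ∈ F1 ∧ v ∉ F2) ∨ (v ∈ F2 ∧ v ∉ F1) := by
    by_contra hcon
    push_neg at hcon
    apply hne
    ext x
    simp only [Finset.mem_inter]
    constructor
    · rintro ⟨h1, hxS⟩
      exact ⟨(hcon x hxS).1 h1, hxS⟩
    · rintro ⟨h2, hxS⟩
      exact ⟨(hcon x hxS).2 h2, hxS⟩
  rcases hv with ⟨v, hvS, ⟨hvF1, hvnF2⟩ | ⟨hvF2, hvnF1⟩⟩
  · obtain ⟨m1, hm1, m2, hm2, hne12, w, hp, hvw, havoid⟩ :=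
      CSPAux.key G M hM k S h F2 hF2 hc2 v hvS (hS v hvS) hvnF2
    exact ⟨m1, hm1, m2, hm2, hne12, w, hp, Or.inl ⟨⟨v, hvw, hvF1⟩, havoid⟩⟩
  · obtain ⟨m1, hm1, m2, hm2, hne12, w, hp, hvw, havoid⟩ :=
      CSPAux.key G M hM k S h F1 hF1 hc1 v hvS (hS v hvS) hvnF1
    exact ⟨m1, hm1, m2, hm2, hne12, w, hp, Or.inr ⟨⟨v, hvw, hvF2⟩, havoid⟩⟩
end

section
/- Necessary condition under CSP: if S is k-identifiable under CSP, then for every node set V' containing at most one monitor and at most k nodes total, every connected component of G − V' containing a node of S also contains a monitor. -/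
open Finset SimpleGraph
open scoped Classical

variable {V : Type*} [Fintype V] [DecidableEq V]

theorem component_condition_of_cspIdentifiable
    (G : SimpleGraph V) (hG : G.Connected) (M : Finset V) (hM : 2 ≤ M.card)
    (S : Finset V) (hS : ∀ v ∈ S, v ∉ M) (k : ℕ)
    (h : cspIdentifiable G M k S) :
    ∀ V' : Finset V, (V' ∩ M).card ≤ 1 → V'.card ≤ k →
      ∀ v ∈ S, v ∉ V' → ∃ m ∈ M, ∃ w : G.Walk v m, ∀ x ∈ w.support, x ∉ V' := by
  intro V' hVM hVk v hvS hvV'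
  by_contra h'
  push_neg at h'
  rcases V'.eq_empty_or_nonempty with rfl | hne
  · obtain ⟨m, hm⟩ := Finset.card_pos.mp (by omega : 0 < M.card)
    obtain ⟨w⟩ := hG.preconnected v m
    obtain ⟨x, hx, hxV⟩ := h' m hm w
    exact absurd hxV (Finset.notMem_empty x)
  · obtain ⟨e, heV, hekey⟩ : ∃ e ∈ V', ∀ x ∈ V', x ≠ e → x ∉ M := by
      rcases (V' ∩ M).eq_empty_or_nonempty with hempty | ⟨e, he⟩
      · obtain ⟨e, he⟩ := hne
        refine ⟨e, he, fun x hx _ hxM => ?_⟩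
        have : x ∈ V' ∩ M := Finset.mem_inter.mpr ⟨hx, hxM⟩
        simp [hempty] at this
      · refine ⟨e, (Finset.mem_inter.mp he).1, fun x hx hxe hxM => hxe ?_⟩
        exact Finset.card_le_one.mp hVM x (Finset.mem_inter.mpr ⟨hx, hxM⟩) e he
    set F1 := V'.erase e with hF1
    set F2 := insert v F1 with hF2
    have hvF1 : v ∉ F1 := fun hv => hvV' (Finset.mem_of_mem_erase hv)
    have hvM : v ∉ M := hS v hvS
    have hcard1 : F1.card = V'.card - 1 := Finset.card_erase_of_mem heV
    have hVpos : 1 ≤ V'.card := Finset.card_pos.mpr hne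
    have hF1M : ∀ x ∈ F1, x ∉ M := fun x hx =>
      hekey x (Finset.mem_of_mem_erase hx) (Finset.ne_of_mem_erase hx)
    have hF2M : ∀ x ∈ F2, x ∉ M := by
      intro x hx
      rcases Finset.mem_insert.mp hx with rfl | hx
      · exact hvM
      · exact hF1M x hx
    have hc1 : F1.card ≤ k := by omega
    have hc2 : F2.card ≤ k := by
      rw [hF2, Finset.card_insert_of_notMem hvF1]; omega
    have hneq : F1 ∩ S ≠ F2 ∩ S := by
      intro heq
      have hv2 : v ∈ F1 ∩ S := by
        rw [heq]; exact Finset.mem_inter.mpr ⟨Finset.mem_insert_self _ _, hvS⟩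
      exact hvF1 (Finset.mem_inter.mp hv2).1
    obtain ⟨m1, hm1, m2, hm2, hm12, w, hwp, hdis⟩ :=
      h F1 F2 hF1M hF2M hc1 hc2 hneq
    have hsub : F1 ⊆ F2 := Finset.subset_insert _ _
    rcases hdis with ⟨⟨x, hxs, hx1⟩, hall2⟩ | ⟨⟨x, hxs, hx2⟩, hall1⟩
    · exact hall2 x hxs (hsub hx1)
    · have hxv : x = v := by
        rcases Finset.mem_insert.mp hx2 with rfl | hmem
        · rfl
        · exact absurd hmem (hall1 x hxs)
      subst hxv
      obtain ⟨x1, hx1s, hx1V⟩ := h' m1 hm1 ((w.takeUntil x hxs).reverse)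
      obtain ⟨x2, hx2s, hx2V⟩ := h' m2 hm2 (w.dropUntil x hxs)
      rw [SimpleGraph.Walk.support_reverse, List.mem_reverse] at hx1s
      have hx1w : x1 ∈ w.support := SimpleGraph.Walk.support_takeUntil_subset _ hxs hx1s
      have hx2w : x2 ∈ w.support := SimpleGraph.Walk.support_dropUntil_subset _ hxs hx2s
      have hx1e : x1 = e := by
        by_contra hne1
        exact hall1 x1 hx1w (Finset.mem_erase.mpr ⟨hne1, hx1V⟩)
      have hx2e : x2 = e := by
        by_contra hne2
        exact hall1 x2 hx2w (Finset.mem_erase.mpr ⟨hne2, hx2V⟩)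
      rw [hx1e] at hx1s
      rw [hx2e] at hx2s
      have hev : e ≠ x := fun hh => hvV' (hh ▸ heV)
      have hsupp : w.support = (w.takeUntil x hxs).support
          ++ (w.dropUntil x hxs).support.tail := by
        conv_lhs => rw [← w.take_spec hxs]
        exact SimpleGraph.Walk.support_append _ _
      have hnodup := hwp.support_nodup
      rw [hsupp] at hnodup
      have hdisj := (List.nodup_append'.mp hnodup).2.2
      have htail : e ∈ (w.dropUntil x hxs).support.tail := by
        have hcons := (w.dropUntil x hxs).support_eq_cons
        rw [hcons] at hx2s
        rcases List.mem_cons.mp hx2s with hh | hh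
        · exact absurd hh hev
        · exact hh
      exact hdisj hx1s htail
end

section
/- Under CSP, S is σ-identifiable (σ = |N|) if and only if every node in S has at least two monitors as neighbors in G. -/
open Finset SimpleGraph
open scoped Classical

variable {V : Type*} [Fintype V] [DecidableEq V]

/-- An internal vertex of a path has two distinct neighbors on the path,
both different from itself. -/
lemma internal_two_neighbors {G : SimpleGraph V} {m1 m2 v : V} (w : G.Walk m1 m2)
    (hw : w.IsPath) (hv : v ∈ w.support) (h1 : v ≠ m1) (h2 : v ≠ m2) :
    ∃ a b, a ≠ b ∧ G.Adj v a ∧ G.Adj v b ∧ a ∈ w.support ∧ b ∈ w.support ∧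
      a ≠ v ∧ b ≠ v := by
  obtain ⟨p, q, rfl⟩ : ∃ (p : G.Walk m1 v) (q : G.Walk v m2),
      w = p.append q := ⟨w.takeUntil v hv, w.dropUntil v hv, (w.take_spec hv).symm⟩
  have hp : p.IsPath := hw.of_append_left
  have hq : q.IsPath := hw.of_append_right
  -- get the neighbor from q
  have hqnil : ¬ q.Nil := by
    intro h
    cases q with
    | nil => exact h2 rfl
    | cons h' q' => simp at h
  obtain ⟨b, hvb, q', rfl⟩ := SimpleGraph.Walk.not_nil_iff.mp hqnil
  -- get the neighbor from p, via its reverse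
  have hprnil : ¬ p.reverse.Nil := by
    intro h
    cases hpr : p.reverse with
    | nil =>
      have := congrArg SimpleGraph.Walk.reverse hpr
      rw [SimpleGraph.Walk.reverse_reverse] at this
      subst this
      exact h1 rfl
    | cons h' p' => rw [hpr] at h; simp at h
  obtain ⟨a, hva, p', hpr⟩ := SimpleGraph.Walk.not_nil_iff.mp hprnil
  have hap : a ∈ p.support := by
    have : a ∈ p.reverse.support := by rw [hpr]; simp
    rwa [SimpleGraph.Walk.support_reverse, List.mem_reverse] at this
  have hprpath : p.reverse.IsPath := hp.reverse
  rw [hpr] at hprpath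
  have hav : a ≠ v := by
    intro h
    have hvnp : v ∉ p'.support := ((SimpleGraph.Walk.cons_isPath_iff _ _).mp hprpath).2
    exact hvnp (h ▸ p'.start_mem_support)
  have hbtail : b ∈ (SimpleGraph.Walk.cons hvb q').support.tail := by
    simp [SimpleGraph.Walk.support_cons]
  have hbv : b ≠ v := by
    intro h
    have hvnq : v ∉ q'.support := ((SimpleGraph.Walk.cons_isPath_iff _ _).mp hq).2
    exact hvnq (h ▸ q'.start_mem_support)
  have hnodup := hw.2
  rw [SimpleGraph.Walk.support_append, List.nodup_append] at hnodup
  have hab : a ≠ b := fun h => hnodup.2.2 a hap b hbtail h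
  have hbq : b ∈ (SimpleGraph.Walk.cons hvb q').support := by
    simp [SimpleGraph.Walk.support_cons]
  refine ⟨a, b, hab, hva, hvb, ?_, ?_, hav, hbv⟩
  · rw [SimpleGraph.Walk.mem_support_append_iff]; exact Or.inl hap
  · rw [SimpleGraph.Walk.mem_support_append_iff]; exact Or.inr hbq

theorem cspIdentifiable_sigma_iff_two_monitor_neighbors
    (G : SimpleGraph V) (hG : G.Connected) (M : Finset V) (hM : 2 ≤ M.card)
    (S : Finset V) (hS : ∀ v ∈ S, v ∉ M) :
    cspIdentifiable G M (Fintype.card V - M.card) S ↔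
      ∀ v ∈ S, 2 ≤ (M.filter (fun m => G.Adj v m)).card := by
  constructor
  · intro hid v hvS
    set F1 : Finset V := Mᶜ with hF1def
    set F2 : Finset V := F1.erase v with hF2def
    have hvF1 : v ∈ F1 := by simp [hF1def, hS v hvS]
    have hcard1 : F1.card ≤ Fintype.card V - M.card := by
      rw [hF1def, Finset.card_compl]
    have hcard2 : F2.card ≤ Fintype.card V - M.card :=
      le_trans (Finset.card_erase_le) hcard1
    have hne : F1 ∩ S ≠ F2 ∩ S := by
      intro h
      have hv1 : v ∈ F1 ∩ S := Finset.mem_inter.mpr ⟨hvF1, hvS⟩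
      rw [h] at hv1
      exact (Finset.notMem_erase v F1) (Finset.mem_inter.mp hv1).1
    obtain ⟨m1, hm1, m2, hm2, hm12, w, hw, hcase⟩ :=
      hid F1 F2 (fun x hx => by simpa [hF1def] using hx)
        (fun x hx => by
          have := Finset.mem_of_mem_erase hx
          simpa [hF1def] using this)
        hcard1 hcard2 hne
    have hF2sub : F2 ⊆ F1 := Finset.erase_subset _ _
    rcases hcase with ⟨⟨x, hxsup, hxF1⟩, havoid⟩ | ⟨⟨x, hxsup, hxF2⟩, havoid⟩
    · -- x ∈ F1, all support ∉ F2, so the only non-monitor on the walk is v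
      have hxv : x = v := by
        by_contra hxv
        exact havoid x hxsup (Finset.mem_erase.mpr ⟨hxv, hxF1⟩)
      subst hxv
      have hvm1 : x ≠ m1 := fun h => by simp [hF1def, h, hm1] at hvF1
      have hvm2 : x ≠ m2 := fun h => by simp [hF1def, h, hm2] at hvF1
      obtain ⟨a, b, hab, hxa, hxb, ha, hb, hav, hbv⟩ :=
        internal_two_neighbors w hw hxsup hvm1 hvm2
      have hmem : ∀ y ∈ w.support, y ≠ x → y ∈ M := by
        intro y hy hyx
        by_contra hyM
        exact havoid y hy (Finset.mem_erase.mpr ⟨hyx, by simp [hF1def, hyM]⟩)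
      have haM : a ∈ M.filter (fun m => G.Adj x m) :=
        Finset.mem_filter.mpr ⟨hmem a ha hav, hxa⟩
      have hbM : b ∈ M.filter (fun m => G.Adj x m) :=
        Finset.mem_filter.mpr ⟨hmem b hb hbv, hxb⟩
      exact Finset.one_lt_card.mpr ⟨a, haM, b, hbM, hab⟩
    · exact absurd (havoid x hxsup) (fun h => h (hF2sub hxF2))
  · intro hnbr F1 F2 hF1M hF2M _ _ hne
    -- find a vertex in S in exactly one of F1, F2
    have key : ∀ (A B : Finset V), (∀ x ∈ B, x ∉ M) → (v : V) → v ∈ A → v ∈ S → v ∉ B →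
        cspDistinguishable G M A B ∨ cspDistinguishable G M B A := by
      intro A B hBM v hvA hvS hvB
      obtain ⟨m1, hm1, m2, hm2, hm12⟩ := Finset.one_lt_card.mp (hnbr v hvS)
      rw [Finset.mem_filter] at hm1 hm2
      have hvm1 : v ≠ m1 := fun h => hS v hvS (h ▸ hm1.1)
      have hvm2 : v ≠ m2 := fun h => hS v hvS (h ▸ hm2.1)
      refine Or.inl ⟨m1, hm1.1, m2, hm2.1, hm12,
        SimpleGraph.Walk.cons hm1.2.symm (SimpleGraph.Walk.cons hm2.2 SimpleGraph.Walk.nil),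
        ?_, Or.inl ⟨⟨v, by simp, hvA⟩, ?_⟩⟩
      · rw [SimpleGraph.Walk.isPath_def]
        simp [SimpleGraph.Walk.support_cons, hvm1.symm, hvm2, hm12]
      · intro x hx
        simp [SimpleGraph.Walk.support_cons] at hx
        rcases hx with rfl | rfl | rfl
        · exact fun h => hBM _ h hm1.1
        · exact hvB
        · exact fun h => hBM _ h hm2.1
    have : ∃ v, v ∈ S ∧ ((v ∈ F1 ∧ v ∉ F2) ∨ (v ∈ F2 ∧ v ∉ F1)) := by
      by_contra h
      push_neg at h
      apply hne
      ext x
      simp only [Finset.mem_inter]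
      constructor
      · rintro ⟨hx1, hxS⟩
        exact ⟨(h x hxS).1 hx1, hxS⟩
      · rintro ⟨hx2, hxS⟩
        exact ⟨(h x hxS).2 hx2, hxS⟩
    obtain ⟨v, hvS, hcase⟩ := this
    rcases hcase with ⟨h1, h2⟩ | ⟨h1, h2⟩
    · rcases key F1 F2 hF2M v h1 hvS h2 with h | h
      · exact h
      · obtain ⟨m1, hm1, m2, hm2, hm12, w, hw, hc⟩ := h
        exact ⟨m1, hm1, m2, hm2, hm12, w, hw, hc.symm⟩
    · rcases key F2 F1 hF1M v h1 hvS h2 with h | h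
      · obtain ⟨m1, hm1, m2, hm2, hm12, w, hw, hc⟩ := h
        exact ⟨m1, hm1, m2, hm2, hm12, w, hw, hc.symm⟩
      · exact h
end

section
/- Sufficient condition under UP via minimum set cover: if for every v ∈ S the minimum number MSC(v) of other non-monitors needed to cover all paths through v satisfies MSC(v) ≥ k+1, then S is k-identifiable (k ≤ σ−1). Necessary condition: if S is k-identifiable (k ≤ σ), then MSC(v) ≥ k for all v ∈ S. -/
open Finset

variable {α : Type*} [DecidableEq α]

/-- `MSC N P v`: the minimum number of other non-monitors needed to cover all paths
through `v`; equals `|N|` when no such cover exists. -/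
noncomputable def MSC (N : Finset α) (P : Finset (Finset α)) (v : α) : ℕ :=
  sInf ({n | ∃ V' ⊆ N \ {v}, (∀ p ∈ P, v ∈ p → (p ∩ V').Nonempty) ∧ V'.card = n}
          ∪ {N.card})

theorem identifiable_UP_MSC_conditions
    (N : Finset α) (P : Finset (Finset α)) (S : Finset α) (hS : S ⊆ N)
    (hP : ∀ p ∈ P, p ⊆ N) (k : ℕ) :
    ((k + 1 ≤ N.card) → (∀ v ∈ S, k + 1 ≤ MSC N P v) → identifiable N P k S) ∧
    ((k ≤ N.card) → identifiable N P k S → ∀ v ∈ S, k ≤ MSC N P v) := by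
  have key : ∀ v : α, ∀ (V' : Finset α), k + 1 ≤ MSC N P v → V' ⊆ N \ {v} →
      V'.card ≤ k → ∃ p ∈ P, v ∈ p ∧ p ∩ V' = ∅ := by
    intro v V' h hV' hcard
    by_contra hc
    push_neg at hc
    have hmem : V'.card ∈ ({n | ∃ V'' ⊆ N \ {v},
        (∀ p ∈ P, v ∈ p → (p ∩ V'').Nonempty) ∧ V''.card = n} ∪ {N.card} : Set ℕ) := by
      left
      exact ⟨V', hV', fun p hp hvp =>
        hc p hp hvp, rfl⟩
    have := Nat.sInf_le hmem
    unfold MSC at h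
    omega
  constructor
  · intro _hk hmsc F1 F2 hF1 hF2 hc1 hc2 hne
    have hcases : ¬(F1 ∩ S ⊆ F2 ∩ S) ∨ ¬(F2 ∩ S ⊆ F1 ∩ S) := by
      by_contra h; push_neg at h; exact hne (Finset.Subset.antisymm h.1 h.2)
    rcases hcases with h | h
    · obtain ⟨v, hv1, hv2⟩ := Finset.not_subset.mp h
      rw [Finset.mem_inter] at hv1
      have hvS : v ∈ S := hv1.2
      have hvF2 : v ∉ F2 := fun hf => hv2 (Finset.mem_inter.mpr ⟨hf, hvS⟩)
      have hsub : F2 ⊆ N \ {v} := fun x hx =>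
        Finset.mem_sdiff.mpr ⟨hF2 hx, fun hxv =>
          hvF2 (by rwa [Finset.mem_singleton.mp hxv] at hx)⟩
      obtain ⟨p, hp, hvp, hpe⟩ := key v F2 (hmsc v hvS) hsub hc2
      exact ⟨p, hp, Or.inl ⟨⟨v, Finset.mem_inter.mpr ⟨hvp, hv1.1⟩⟩, hpe⟩⟩
    · obtain ⟨v, hv1, hv2⟩ := Finset.not_subset.mp h
      rw [Finset.mem_inter] at hv1
      have hvS : v ∈ S := hv1.2
      have hvF1 : v ∉ F1 := fun hf => hv2 (Finset.mem_inter.mpr ⟨hf, hvS⟩)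
      have hsub : F1 ⊆ N \ {v} := fun x hx =>
        Finset.mem_sdiff.mpr ⟨hF1 hx, fun hxv =>
          hvF1 (by rwa [Finset.mem_singleton.mp hxv] at hx)⟩
      obtain ⟨p, hp, hvp, hpe⟩ := key v F1 (hmsc v hvS) hsub hc1
      exact ⟨p, hp, Or.inr ⟨⟨v, Finset.mem_inter.mpr ⟨hvp, hv1.1⟩⟩, hpe⟩⟩
  · intro hk hid v hv
    apply le_csInf ⟨N.card, Or.inr rfl⟩
    rintro n (⟨V', hV', hcov, rfl⟩ | rfl)
    · by_contra hlt
      push_neg at hlt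
      have hvV' : v ∉ V' := fun h =>
        (Finset.mem_sdiff.mp (hV' h)).2 (Finset.mem_singleton_self v)
      have hF1 : insert v V' ⊆ N := Finset.insert_subset (hS hv)
        (hV'.trans (Finset.sdiff_subset))
      have hne : (insert v V') ∩ S ≠ V' ∩ S := by
        intro he
        have : v ∈ V' ∩ S := he ▸ Finset.mem_inter.mpr ⟨Finset.mem_insert_self v V', hv⟩
        exact hvV' (Finset.mem_inter.mp this).1
      have hd := hid (insert v V') V' hF1 (hV'.trans (Finset.sdiff_subset))
        (by rw [Finset.card_insert_of_notMem hvV']; omega) (by omega) hne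
      rcases hd with ⟨p, hp, ⟨hne1, he2⟩ | ⟨hne2, he1⟩⟩
      · have hvp : v ∈ p := by
          rcases hne1 with ⟨x, hx⟩
          rw [Finset.mem_inter, Finset.mem_insert] at hx
          rcases hx.2 with rfl | hxV'
          · exact hx.1
          · exact absurd (Finset.mem_inter.mpr ⟨hx.1, hxV'⟩) (by simp [he2])
        have := hcov p hp hvp
        rw [he2] at this
        exact absurd this (by simp)
      · rcases hne2 with ⟨x, hx⟩
        rw [Finset.mem_inter] at hx
        have : x ∈ p ∩ insert v V' :=
          Finset.mem_inter.mpr ⟨hx.1, Finset.mem_insert_of_mem hx.2⟩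
        rw [he1] at this
        simp at this
    · exact hk
end

section
/- Bounds on the per-node maximum identifiability index under UP: for any non-monitor v, MSC(v) − 1 ≤ Ω(v) ≤ MSC(v). -/
open Finset

variable {α : Type*} [DecidableEq α]

/-- The maximum identifiability index of a single node `v`:
the largest `k ≤ |N|` such that `{v}` is `k`-identifiable. -/
noncomputable def OmegaNode (N : Finset α) (P : Finset (Finset α)) (v : α) : ℕ :=
  sSup {k | k ≤ N.card ∧ identifiable N P k {v}}

theorem OmegaNode_bounds_MSC
    (N : Finset α) (P : Finset (Finset α)) (v : α) (hv : v ∈ N)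
    (hP : ∀ p ∈ P, p ⊆ N) (hPv : ∃ p ∈ P, v ∈ p) :
    MSC N P v - 1 ≤ OmegaNode N P v ∧ OmegaNode N P v ≤ MSC N P v := by
  set m := MSC N P v with hm
  set S : Set ℕ := {n | ∃ V' ⊆ N \ {v}, (∀ p ∈ P, v ∈ p → (p ∩ V').Nonempty) ∧ V'.card = n}
  have hNS : N.card ∈ S ∪ {N.card} := Or.inr rfl
  have hmle : m ≤ N.card := Nat.sInf_le hNS
  have hbdd : BddAbove {k | k ≤ N.card ∧ identifiable N P k {v}} :=
    ⟨N.card, fun k hk => hk.1⟩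
  -- key: any set of card < m is not a cover
  have hnotcover : ∀ F : Finset α, F ⊆ N → v ∉ F → F.card < m →
      ∃ p ∈ P, v ∈ p ∧ p ∩ F = ∅ := by
    intro F hFN hvF hFc
    by_contra h
    push_neg at h
    have hmem : F.card ∈ S ∪ {N.card} := by
      left
      refine ⟨F, ?_, ?_, rfl⟩
      · intro x hx
        simp only [mem_sdiff, mem_singleton]
        exact ⟨hFN hx, fun he => hvF (he ▸ hx)⟩
      · intro p hp hvp
        rcases Finset.eq_empty_or_nonempty (p ∩ F) with he | hne
        · exact absurd he (h p hp hvp).ne_empty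
        · exact hne
    exact absurd (Nat.sInf_le hmem) (not_le.mpr hFc)
  constructor
  · -- lower bound: m - 1 ∈ Ω set
    have hmem : m - 1 ∈ {k | k ≤ N.card ∧ identifiable N P k {v}} := by
      refine ⟨le_trans (Nat.sub_le _ _) hmle, ?_⟩
      intro F1 F2 h1N h2N h1c h2c hne
      -- wlog argument
      have key : ∀ F1 F2 : Finset α, F1 ⊆ N → F2 ⊆ N → F1.card ≤ m - 1 → F2.card ≤ m - 1 →
          v ∈ F1 → v ∉ F2 → distinguishable P F1 F2 := by
        intro F1 F2 h1N h2N h1c h2c hv1 hv2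
        have hF1pos : 1 ≤ F1.card := Finset.card_pos.mpr ⟨v, hv1⟩
        have hF2lt : F2.card < m := by omega
        obtain ⟨p, hp, hvp, hpe⟩ := hnotcover F2 h2N hv2 hF2lt
        exact ⟨p, hp, Or.inl ⟨⟨v, mem_inter.mpr ⟨hvp, hv1⟩⟩, hpe⟩⟩
      rcases Decidable.em (v ∈ F1) with hv1 | hv1 <;> rcases Decidable.em (v ∈ F2) with hv2 | hv2
      · exfalso
        apply hne
        ext x
        simp only [mem_inter, mem_singleton]
        constructor
        · rintro ⟨hx, rfl⟩; exact ⟨hv2, rfl⟩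
        · rintro ⟨hx, rfl⟩; exact ⟨hv1, rfl⟩
      · exact key F1 F2 h1N h2N h1c h2c hv1 hv2
      · rcases key F2 F1 h2N h1N h2c h1c hv2 hv1 with ⟨p, hp, hor⟩
        exact ⟨p, hp, hor.symm⟩
      · exfalso
        apply hne
        ext x
        simp only [mem_inter, mem_singleton]
        constructor
        · rintro ⟨hx, rfl⟩; exact absurd hx hv1
        · rintro ⟨hx, rfl⟩; exact absurd hx hv2
    exact le_csSup hbdd hmem
  · -- upper bound
    refine csSup_le ⟨0, le_refl 0 |>.trans (Nat.zero_le _), ?_⟩ ?_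
    · intro F1 F2 _ _ h1c h2c hne
      rw [Nat.le_zero] at h1c h2c
      rw [Finset.card_eq_zero] at h1c h2c
      subst h1c; subst h2c
      exact absurd rfl hne
    · intro k hk
      by_contra hlt
      push_neg at hlt
      have hmmem : m ∈ S ∪ {N.card} := Nat.sInf_mem ⟨N.card, hNS⟩
      rcases hmmem with hmS | hmN
      · obtain ⟨V', hV'sub, hcov, hVc⟩ := hmS
        have hvV' : v ∉ V' := fun h => by
          have := hV'sub h; simp at this
        have h1N : insert v V' ⊆ N := by
          intro x hx
          rcases mem_insert.mp hx with rfl | hx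
          · exact hv
          · exact (mem_sdiff.mp (hV'sub hx)).1
        have h2N : V' ⊆ N := fun x hx => (mem_sdiff.mp (hV'sub hx)).1
        have h1c : (insert v V').card ≤ k := by
          rw [card_insert_of_notMem hvV', hVc]; omega
        have h2c : V'.card ≤ k := by rw [hVc]; omega
        have hneq : (insert v V') ∩ {v} ≠ V' ∩ {v} := by
          have h1 : v ∈ (insert v V') ∩ {v} := mem_inter.mpr ⟨mem_insert_self _ _, mem_singleton_self _⟩
          have h2 : v ∉ V' ∩ {v} := fun h => hvV' (mem_inter.mp h).1
          intro h; rw [h] at h1; exact h2 h1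
        obtain ⟨p, hp, hor⟩ := hk.2 (insert v V') V' h1N h2N h1c h2c hneq
        rcases hor with ⟨⟨x, hx⟩, hpe⟩ | ⟨⟨x, hx⟩, hpe⟩
        · rcases mem_inter.mp hx with ⟨hxp, hxi⟩
          rcases mem_insert.mp hxi with rfl | hxV
          · obtain ⟨y, hy⟩ := hcov p hp hxp
            rw [hpe] at hy
            exact absurd hy (notMem_empty y)
          · have : x ∈ p ∩ V' := mem_inter.mpr ⟨hxp, hxV⟩
            rw [hpe] at this
            exact absurd this (notMem_empty x)
        · rcases mem_inter.mp hx with ⟨hxp, hxV⟩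
          have : x ∈ p ∩ insert v V' := mem_inter.mpr ⟨hxp, mem_insert_of_mem hxV⟩
          rw [hpe] at this
          exact absurd this (notMem_empty x)
      · simp only [Set.mem_singleton_iff] at hmN
        have := hk.1
        omega
end
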